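/- arXiv:1812.06000 — 16 statements merged into one kernel-verified Lean document; each statement's English description precedes it below -/
import Mathlib

section
/- Let N be a positive integer, p : Fin N → ℝ, and let S be a finset of Fin N with S.card = m such that p i ≤ p j for all i ∈ S and all j ∉ S. If S' is a finset of Fin N with S'.card = m and there exist i ∈ S' and j ∉ S' with p i > p j, then Σ_{i ∈ S} p i < Σ_{i ∈ S'} p i (strict inequality). -/
lemma sum_le_sum_of_card_eq {N : ℕ} (p : Fin N → ℝ) (A B : Finset (Fin N))
    (hcard : A.card = B.card) (hd : ∀ a ∈ A, ∀ b ∈ B, p a ≤ p b) :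
    ∑ i ∈ A, p i ≤ ∑ i ∈ B, p i := by
  rcases A.eq_empty_or_nonempty with rfl | hA
  · have : B = ∅ := Finset.card_eq_zero.mp (by simpa using hcard.symm)
    simp [this]
  · have hB : B.Nonempty := Finset.card_pos.mp (hcard ▸ Finset.card_pos.mpr hA)
    obtain ⟨a, haA, hamax⟩ := A.exists_max_image p hA
    obtain ⟨b, hbB, hbmin⟩ := B.exists_min_image p hB
    calc ∑ i ∈ A, p i ≤ A.card • p a := Finset.sum_le_card_nsmul _ _ _ (fun i hi => hamax i hi)
      _ = B.card • p a := by rw [hcard]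
      _ ≤ B.card • p b := nsmul_le_nsmul_right (hd a haA b hbB) _
      _ ≤ ∑ i ∈ B, p i := Finset.card_nsmul_le_sum _ _ _ (fun i hi => hbmin i hi)

lemma bottom_ranked_subset_min {N : ℕ} (p : Fin N → ℝ) (m : ℕ)
    (S : Finset (Fin N)) (hScard : S.card = m)
    (hbot : ∀ i ∈ S, ∀ j ∉ S, p i ≤ p j)
    (T : Finset (Fin N)) (hTcard : T.card = m) :
    ∑ i ∈ S, p i ≤ ∑ i ∈ T, p i := by
  have hdiffcard : (S \ T).card = (T \ S).card := by
    have h1 := Finset.card_sdiff_add_card_inter S T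
    have h2 := Finset.card_sdiff_add_card_inter T S
    rw [Finset.inter_comm] at h2
    omega
  have key : ∑ i ∈ S \ T, p i ≤ ∑ i ∈ T \ S, p i := by
    apply sum_le_sum_of_card_eq p _ _ hdiffcard
    intro a ha b hb
    exact hbot a (Finset.mem_sdiff.mp ha).1 b (Finset.mem_sdiff.mp hb).2
  have h1 := Finset.sum_inter_add_sum_sdiff S T p
  have h2 := Finset.sum_inter_add_sum_sdiff T S p
  have hint : ∑ i ∈ S ∩ T, p i = ∑ i ∈ T ∩ S, p i := by rw [Finset.inter_comm]
  linarith

/-- Strict version of subset-sum minimality: if `S` consists of the `m`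
lowest-priced assets and `S'` is another subset of size `m` containing an asset strictly
more expensive than some asset outside `S'`, then the sum over `S` is strictly smaller. -/
theorem bottom_ranked_subset_strict_min
    (N : ℕ) (hN : 0 < N) (p : Fin N → ℝ) (m : ℕ)
    (S : Finset (Fin N)) (hScard : S.card = m)
    (hbot : ∀ i ∈ S, ∀ j ∉ S, p i ≤ p j)
    (S' : Finset (Fin N)) (hS'card : S'.card = m)
    (hcross : ∃ i ∈ S', ∃ j ∉ S', p i > p j) :
    ∑ i ∈ S, p i < ∑ i ∈ S', p i := by
  obtain ⟨i, hiS', j, hjS', hij⟩ := hcross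
  set T : Finset (Fin N) := insert j (S'.erase i) with hT
  have hjne : j ∉ S'.erase i := fun h => hjS' (Finset.mem_of_mem_erase h)
  have hTcard : T.card = m := by
    rw [hT, Finset.card_insert_of_notMem hjne, Finset.card_erase_of_mem hiS', hS'card]
    have : 1 ≤ m := hS'card ▸ Finset.card_pos.mpr ⟨i, hiS'⟩
    omega
  have hTsum : ∑ k ∈ T, p k = ∑ k ∈ S', p k - p i + p j := by
    rw [hT, Finset.sum_insert hjne, Finset.sum_erase_eq_sub hiS']
    ring
  have h1 : ∑ k ∈ S, p k ≤ ∑ k ∈ T, p k :=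
    bottom_ranked_subset_min p m S hScard hbot T hTcard
  linarith
end

section
/- For every time t, the one-period return of the small portfolio relative to the market is at least the one-period change in the relative price of the bottom-ranked subset: V_s(t+1)/V_s(t) ≥ (Θ_s(t+1)/Θ_s(t)) · (V_m(t+1)/V_m(t)). Equivalently, the crossover gain satisfies C(t) ≥ 0. -/
/-- The sum of a function over a "bottom" set is at most the sum over any
set of the same cardinality. -/
lemma bottom_sum_le {α : Type*} [DecidableEq α] (f : α → ℝ) (A T : Finset α)
    (hcard : A.card = T.card) (hb : ∀ i ∈ A, ∀ j ∉ A, f i ≤ f j) :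
    ∑ i ∈ A, f i ≤ ∑ i ∈ T, f i := by
  have hAd : A = (A \ T) ∪ (A ∩ T) := by
    ext x; simp [Finset.mem_sdiff, Finset.mem_inter, Finset.mem_union]; tauto
  have hTd : T = (T \ A) ∪ (A ∩ T) := by
    ext x; simp [Finset.mem_sdiff, Finset.mem_inter, Finset.mem_union]; tauto
  have hA : ∑ i ∈ A, f i = ∑ i ∈ A \ T, f i + ∑ i ∈ A ∩ T, f i := by
    rw [← Finset.sum_union (by simp [Finset.disjoint_left]; tauto)]; rw [← hAd]
  have hT : ∑ i ∈ T, f i = ∑ i ∈ T \ A, f i + ∑ i ∈ A ∩ T, f i := by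
    rw [← Finset.sum_union (by simp [Finset.disjoint_left]; tauto)]; rw [← hTd]
  rw [hA, hT]
  have hcard' : (A \ T).card = (T \ A).card := by
    have h1 : (A \ T).card + (A ∩ T).card = A.card := by
      rw [← Finset.card_union_of_disjoint (by simp [Finset.disjoint_left]; tauto), ← hAd]
    have h2 : (T \ A).card + (A ∩ T).card = T.card := by
      rw [← Finset.card_union_of_disjoint (by simp [Finset.disjoint_left]; tauto), ← hTd]
    omega
  have e := Finset.equivOfCardEq hcard'
  have key : ∑ i ∈ A \ T, f i ≤ ∑ i ∈ T \ A, f i := by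
    have hcomp := Equiv.sum_comp e (fun j : {x // x ∈ T \ A} => f j.1)
    calc ∑ i ∈ A \ T, f i = ∑ i : {x // x ∈ A \ T}, f i.1 :=
          (Finset.sum_coe_sort _ f).symm
      _ ≤ ∑ i : {x // x ∈ A \ T}, f (e i).1 := ?_
      _ = ∑ j : {x // x ∈ T \ A}, f j.1 := hcomp
      _ = ∑ i ∈ T \ A, f i := Finset.sum_coe_sort _ f
    refine Finset.sum_le_sum fun i _ => ?_
    have hi : (i : α) ∈ A := (Finset.mem_sdiff.mp i.2).1
    have hj : ((e i : α)) ∉ A := (Finset.mem_sdiff.mp (e i).2).2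
    exact hb i hi _ hj
  linarith

/-- one-period relative return of the small portfolio is at least the change in the relative price of the bottom-ranked subset; equivalently the crossover gain is nonnegative. -/
theorem small_portfolio_one_period_rank_effect
    (N c : ℕ) (hc : 1 ≤ c) (hcN : c < N)
    (p : ℕ → Fin N → ℝ) (hp : ∀ t i, 0 < p t i)
    (S : ℕ → Finset (Fin N)) (hScard : ∀ t, (S t).card = N - c)
    (hbot : ∀ t, ∀ i ∈ S t, ∀ j ∉ S t, p t i ≤ p t j)
    (Vm B G Θs Θb Vs Vb C : ℕ → ℝ)
    (hVm : ∀ t, Vm t = ∑ i, p t i)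
    (hB : ∀ t, B t = ∑ i ∈ S t, p t i)
    (hG : ∀ t, G t = ∑ i ∈ (S t)ᶜ, p t i)
    (hΘs : ∀ t, Θs t = B t / Vm t)
    (hΘb : ∀ t, Θb t = G t / Vm t)
    (hVs0 : Vs 0 = Vm 0)
    (hVs : ∀ t, Vs (t + 1) = Vs t * (∑ i ∈ S t, p (t + 1) i) / B t)
    (hVb0 : Vb 0 = Vm 0)
    (hVb : ∀ t, Vb (t + 1) = Vb t * (∑ i ∈ (S t)ᶜ, p (t + 1) i) / G t)
    (hC : ∀ t, C t = (∑ i ∈ S t, p (t + 1) i) - B (t + 1)) :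
    ∀ t, 0 ≤ C t ∧
      Vs (t + 1) / Vs t ≥ (Θs (t + 1) / Θs t) * (Vm (t + 1) / Vm t) := by
  have hSne : ∀ t, (S t).Nonempty := by
    intro t
    rw [← Finset.card_pos, hScard t]; omega
  have hBpos : ∀ t, 0 < B t := by
    intro t; rw [hB t]
    exact Finset.sum_pos (fun i _ => hp t i) (hSne t)
  have hVmpos : ∀ t, 0 < Vm t := by
    intro t; rw [hVm t]
    exact Finset.sum_pos (fun i _ => hp t i) ⟨⟨0, by omega⟩, Finset.mem_univ _⟩
  have hXpos : ∀ t, 0 < ∑ i ∈ S t, p (t + 1) i := by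
    intro t; exact Finset.sum_pos (fun i _ => hp _ i) (hSne t)
  have hVspos : ∀ t, 0 < Vs t := by
    intro t
    induction t with
    | zero => rw [hVs0]; exact hVmpos 0
    | succ n ih =>
      rw [hVs n]
      exact div_pos (mul_pos ih (hXpos n)) (hBpos n)
  have hCnn : ∀ t, 0 ≤ C t := by
    intro t
    rw [hC t, hB (t + 1)]
    have := bottom_sum_le (p (t + 1)) (S (t + 1)) (S t)
      (by rw [hScard, hScard]) (hbot (t + 1))
    linarith
  intro t
  refine ⟨hCnn t, ?_⟩
  have h1 : Vs (t + 1) / Vs t = (∑ i ∈ S t, p (t + 1) i) / B t := by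
    have hv := (hVspos t).ne'
    have hb := (hBpos t).ne'
    rw [hVs t]
    field_simp
  have h2 : (Θs (t + 1) / Θs t) * (Vm (t + 1) / Vm t) = B (t + 1) / B t := by
    rw [hΘs, hΘs]
    have h3 := (hVmpos t).ne'
    have h4 := (hVmpos (t + 1)).ne'
    have h5 := (hBpos t).ne'
    field_simp
  rw [h1, h2, ge_iff_le, div_le_div_iff_of_pos_right (hBpos t)]
  have := hCnn t
  rw [hC t] at this
  linarith
end

section
/- For every time t, the one-period return of the big portfolio relative to the market is at most the one-period change in the relative price of the top-ranked subset: V_b(t+1)/V_b(t) ≤ (Θ_b(t+1)/Θ_b(t)) · (V_m(t+1)/V_m(t)). -/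
/-- If every value on `s` is at most every value on `u`, and cards agree,
then the sum over `s` is at most the sum over `u`. -/
lemma sum_le_sum_of_card_eq_s4 {α : Type*} (s u : Finset α) (f : α → ℝ)
    (hcard : s.card = u.card)
    (hle : ∀ a ∈ s, ∀ b ∈ u, f a ≤ f b) :
    ∑ a ∈ s, f a ≤ ∑ b ∈ u, f b := by
  rcases s.eq_empty_or_nonempty with rfl | hs
  · have : u = ∅ := Finset.card_eq_zero.mp (by simpa using hcard.symm)
    simp [this]
  · have hu : u.Nonempty := Finset.card_pos.mp (hcard ▸ Finset.card_pos.mpr hs)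
    obtain ⟨b, hb, hbmin⟩ := u.exists_min_image f hu
    calc ∑ a ∈ s, f a ≤ ∑ _a ∈ s, f b := Finset.sum_le_sum (fun a ha => hle a ha b hb)
      _ = s.card * f b := by rw [Finset.sum_const, nsmul_eq_mul]
      _ = u.card * f b := by rw [hcard]
      _ = ∑ _b ∈ u, f b := by rw [Finset.sum_const, nsmul_eq_mul]
      _ ≤ ∑ b ∈ u, f b := Finset.sum_le_sum (fun x hx => hbmin x hx)

/-- one-period relative return of the big portfolio is at most the change in the relative price of the top-ranked subset. -/
theorem big_portfolio_one_period_rank_effect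
    (N c : ℕ) (hc : 1 ≤ c) (hcN : c < N)
    (p : ℕ → Fin N → ℝ) (hp : ∀ t i, 0 < p t i)
    (S : ℕ → Finset (Fin N)) (hScard : ∀ t, (S t).card = N - c)
    (hbot : ∀ t, ∀ i ∈ S t, ∀ j ∉ S t, p t i ≤ p t j)
    (Vm B G Θs Θb Vs Vb C : ℕ → ℝ)
    (hVm : ∀ t, Vm t = ∑ i, p t i)
    (hB : ∀ t, B t = ∑ i ∈ S t, p t i)
    (hG : ∀ t, G t = ∑ i ∈ (S t)ᶜ, p t i)
    (hΘs : ∀ t, Θs t = B t / Vm t)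
    (hΘb : ∀ t, Θb t = G t / Vm t)
    (hVs0 : Vs 0 = Vm 0)
    (hVs : ∀ t, Vs (t + 1) = Vs t * (∑ i ∈ S t, p (t + 1) i) / B t)
    (hVb0 : Vb 0 = Vm 0)
    (hVb : ∀ t, Vb (t + 1) = Vb t * (∑ i ∈ (S t)ᶜ, p (t + 1) i) / G t)
    (hC : ∀ t, C t = (∑ i ∈ S t, p (t + 1) i) - B (t + 1)) :
    ∀ t, Vb (t + 1) / Vb t ≤ (Θb (t + 1) / Θb t) * (Vm (t + 1) / Vm t) := by
  -- complement cardinality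
  have hcompl : ∀ t, ((S t)ᶜ : Finset (Fin N)).card = c := by
    intro t
    rw [Finset.card_compl, hScard, Fintype.card_fin]
    omega
  have hcomplne : ∀ t, ((S t)ᶜ : Finset (Fin N)).Nonempty := by
    intro t; rw [← Finset.card_pos, hcompl]; omega
  have hGpos : ∀ t, 0 < G t := by
    intro t; rw [hG]; exact Finset.sum_pos (fun i _ => hp t i) (hcomplne t)
  have : Nonempty (Fin N) := ⟨⟨0, by omega⟩⟩
  have hVmpos : ∀ t, 0 < Vm t := by
    intro t; rw [hVm]
    exact Finset.sum_pos (fun i _ => hp t i) Finset.univ_nonempty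
  have hSumpos : ∀ t, 0 < ∑ i ∈ (S t)ᶜ, p (t + 1) i := by
    intro t; exact Finset.sum_pos (fun i _ => hp (t+1) i) (hcomplne t)
  have hVbpos : ∀ t, 0 < Vb t := by
    intro t
    induction t with
    | zero => rw [hVb0]; exact hVmpos 0
    | succ n ih =>
      rw [hVb n]
      exact div_pos (mul_pos ih (hSumpos n)) (hGpos n)
  intro t
  -- key inequality: sum over old top set ≤ G (t+1)
  have hkey : (∑ i ∈ (S t)ᶜ, p (t + 1) i) ≤ G (t + 1) := by
    rw [hG]
    set A := (S t)ᶜ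
    set T := (S (t+1))ᶜ
    have hcards : (A \ T).card = (T \ A).card := by
      have h1 : (A \ T).card = A.card - (A ∩ T).card := by
        rw [Finset.card_sdiff_add_card_inter A T |>.symm]; omega
      have h2 : (T \ A).card = T.card - (T ∩ A).card := by
        rw [Finset.card_sdiff_add_card_inter T A |>.symm]; omega
      rw [h1, h2, Finset.inter_comm, hcompl, hcompl]
    have hAsplit : ∑ i ∈ A, p (t+1) i
        = ∑ i ∈ A ∩ T, p (t+1) i + ∑ i ∈ A \ T, p (t+1) i := by
      rw [Finset.sum_inter_add_sum_sdiff]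
    have hTsplit : ∑ i ∈ T, p (t+1) i
        = ∑ i ∈ T ∩ A, p (t+1) i + ∑ i ∈ T \ A, p (t+1) i := by
      rw [Finset.sum_inter_add_sum_sdiff]
    rw [hAsplit, hTsplit, Finset.inter_comm]
    refine add_le_add (le_refl _) ?_
    apply sum_le_sum_of_card_eq_s4 _ _ _ hcards
    intro a ha b hb
    have haS : a ∈ S (t+1) := by
      have := (Finset.mem_sdiff.mp ha).2
      simpa [T, Finset.mem_compl] using this
    have hbS : b ∉ S (t+1) := by
      have := (Finset.mem_sdiff.mp hb).1
      simpa [T, Finset.mem_compl] using this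
    exact hbot (t+1) a haS b hbS
  -- rewrite both sides
  have hlhs : Vb (t + 1) / Vb t = (∑ i ∈ (S t)ᶜ, p (t + 1) i) / G t := by
    have h1 := (hVbpos t).ne'
    have h2 := (hGpos t).ne'
    rw [hVb t]
    field_simp
  have hrhs : (Θb (t + 1) / Θb t) * (Vm (t + 1) / Vm t) = G (t + 1) / G t := by
    have h1 := (hVmpos t).ne'
    have h2 := (hVmpos (t+1)).ne'
    have h3 := (hGpos t).ne'
    rw [hΘb, hΘb]
    field_simp
  rw [hlhs, hrhs]
  exact div_le_div_of_nonneg_right hkey (hGpos t).le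
end

section
/- Exact one-period decomposition for the small portfolio: for every time t, log(V_s(t+1)/V_s(t)) − log(V_m(t+1)/V_m(t)) = (log Θ_s(t+1) − log Θ_s(t)) + log(1 + C(t)/B(t+1)), and moreover C(t) ≥ 0, so the crossover term log(1 + C(t)/B(t+1)) is nonnegative. -/
/-- The bottom-ranked subset minimizes the sum among subsets of the same cardinality. -/
lemma bottom_sum_min {N : ℕ} (p : Fin N → ℝ) (S' T : Finset (Fin N))
    (hcard : T.card = S'.card)
    (hbot : ∀ i ∈ S', ∀ j ∉ S', p i ≤ p j) :
    ∑ i ∈ S', p i ≤ ∑ i ∈ T, p i := by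
  have hA : ∑ i ∈ S', p i = ∑ i ∈ S' ∩ T, p i + ∑ i ∈ S' \ T, p i := by
    rw [Finset.sum_inter_add_sum_sdiff]
  have hT : ∑ i ∈ T, p i = ∑ i ∈ T ∩ S', p i + ∑ i ∈ T \ S', p i := by
    rw [Finset.sum_inter_add_sum_sdiff]
  have hcap : S' ∩ T = T ∩ S' := Finset.inter_comm _ _
  have hcards : (S' \ T).card = (T \ S').card := by
    have h1 := Finset.card_inter_add_card_sdiff S' T
    have h2 := Finset.card_inter_add_card_sdiff T S'
    have h3 : (S' ∩ T).card = (T ∩ S').card := by rw [hcap]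
    omega
  have key : ∑ i ∈ S' \ T, p i ≤ ∑ i ∈ T \ S', p i := by
    rcases Finset.eq_empty_or_nonempty (T \ S') with he | hne
    · have : (S' \ T) = ∅ := Finset.card_eq_zero.mp (by rw [hcards, he]; simp)
      simp [this, he]
    · set m := (T \ S').inf' hne p with hm
      have h1 : ∀ i ∈ S' \ T, p i ≤ m := by
        intro i hi
        apply Finset.le_inf'
        intro j hj
        exact hbot i (Finset.mem_sdiff.mp hi).1 j (Finset.mem_sdiff.mp hj).2
      have h2 : ∀ j ∈ T \ S', m ≤ p j := fun j hj => Finset.inf'_le p hj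
      calc ∑ i ∈ S' \ T, p i ≤ ∑ _i ∈ S' \ T, m := Finset.sum_le_sum h1
        _ = (S' \ T).card • m := by rw [Finset.sum_const]
        _ = (T \ S').card • m := by rw [hcards]
        _ ≤ ∑ j ∈ T \ S', p j := Finset.card_nsmul_le_sum _ _ _ h2
  rw [hA, hT, hcap] at *
  linarith

/-- exact one-period decomposition for the small portfolio into relative price change plus a nonnegative crossover term. -/
theorem small_portfolio_one_period_decomposition
    (N c : ℕ) (hc : 1 ≤ c) (hcN : c < N)
    (p : ℕ → Fin N → ℝ) (hp : ∀ t i, 0 < p t i)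
    (S : ℕ → Finset (Fin N)) (hScard : ∀ t, (S t).card = N - c)
    (hbot : ∀ t, ∀ i ∈ S t, ∀ j ∉ S t, p t i ≤ p t j)
    (Vm B G Θs Θb Vs Vb C : ℕ → ℝ)
    (hVm : ∀ t, Vm t = ∑ i, p t i)
    (hB : ∀ t, B t = ∑ i ∈ S t, p t i)
    (hG : ∀ t, G t = ∑ i ∈ (S t)ᶜ, p t i)
    (hΘs : ∀ t, Θs t = B t / Vm t)
    (hΘb : ∀ t, Θb t = G t / Vm t)
    (hVs0 : Vs 0 = Vm 0)
    (hVs : ∀ t, Vs (t + 1) = Vs t * (∑ i ∈ S t, p (t + 1) i) / B t)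
    (hVb0 : Vb 0 = Vm 0)
    (hVb : ∀ t, Vb (t + 1) = Vb t * (∑ i ∈ (S t)ᶜ, p (t + 1) i) / G t)
    (hC : ∀ t, C t = (∑ i ∈ S t, p (t + 1) i) - B (t + 1)) :
    ∀ t, Real.log (Vs (t + 1) / Vs t) - Real.log (Vm (t + 1) / Vm t) =
        (Real.log (Θs (t + 1)) - Real.log (Θs t)) + Real.log (1 + C t / B (t + 1)) ∧
      0 ≤ C t ∧ 0 ≤ Real.log (1 + C t / B (t + 1)) := by
  -- basic positivity facts
  have hSne : ∀ t, (S t).Nonempty := by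
    intro t
    rw [← Finset.card_pos, hScard]
    omega
  have hBpos : ∀ t, 0 < B t := by
    intro t
    rw [hB]
    exact Finset.sum_pos (fun i _ => hp t i) (hSne t)
  have hXpos : ∀ t, 0 < ∑ i ∈ S t, p (t + 1) i :=
    fun t => Finset.sum_pos (fun i _ => hp (t + 1) i) (hSne t)
  have hVmpos : ∀ t, 0 < Vm t := by
    intro t
    rw [hVm]
    exact Finset.sum_pos (fun i _ => hp t i) ⟨⟨0, by omega⟩, Finset.mem_univ _⟩
  have hVspos : ∀ t, 0 < Vs t := by
    intro t
    induction t with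
    | zero => rw [hVs0]; exact hVmpos 0
    | succ n ih =>
        rw [hVs n]
        exact div_pos (mul_pos ih (hXpos n)) (hBpos n)
  intro t
  -- C t ≥ 0
  have hCge : 0 ≤ C t := by
    rw [hC t, hB (t + 1)]
    have := bottom_sum_min (p (t + 1)) (S (t + 1)) (S t)
      (by rw [hScard, hScard]) (hbot (t + 1))
    linarith
  -- 1 + C/B(t+1) = X / B(t+1)
  have hone : 1 + C t / B (t + 1) = (∑ i ∈ S t, p (t + 1) i) / B (t + 1) := by
    have hb := (hBpos (t + 1)).ne'
    rw [hC t]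
    field_simp
    ring
  refine ⟨?_, hCge, ?_⟩
  · rw [hone, hΘs (t + 1), hΘs t, hVs t]
    have hq : 0 < Vs t * (∑ i ∈ S t, p (t + 1) i) / B t :=
      div_pos (mul_pos (hVspos t) (hXpos t)) (hBpos t)
    rw [Real.log_div (ne_of_gt hq) (ne_of_gt (hVspos t)),
        Real.log_div (ne_of_gt (hVmpos (t + 1))) (ne_of_gt (hVmpos t)),
        Real.log_div (ne_of_gt (hBpos (t + 1))) (ne_of_gt (hVmpos (t + 1))),
        Real.log_div (ne_of_gt (hBpos t)) (ne_of_gt (hVmpos t)),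
        Real.log_div (ne_of_gt (hXpos t)) (ne_of_gt (hBpos (t + 1))),
        Real.log_div (ne_of_gt (mul_pos (hVspos t) (hXpos t))) (ne_of_gt (hBpos t)),
        Real.log_mul (ne_of_gt (hVspos t)) (ne_of_gt (hXpos t))]
    ring
  · rw [hone]
    apply Real.log_nonneg
    rw [le_div_iff₀ (hBpos (t + 1))]
    have : B (t + 1) ≤ ∑ i ∈ S t, p (t + 1) i := by
      have := hC t; linarith
    linarith
end

section
/- Exact one-period decomposition for the big portfolio: for every time t, 0 ≤ C(t) < G(t+1) and log(V_b(t+1)/V_b(t)) − log(V_m(t+1)/V_m(t)) = (log Θ_b(t+1) − log Θ_b(t)) + log(1 − C(t)/G(t+1)), so the crossover term log(1 − C(t)/G(t+1)) is nonpositive. -/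
/-- Sum over the bottom-ranked set is minimal among sets of equal cardinality. -/
lemma sum_bot_le_aux {N : ℕ} (p : Fin N → ℝ) (S A : Finset (Fin N))
    (hcard : A.card = S.card)
    (hbot : ∀ i ∈ S, ∀ j ∉ S, p i ≤ p j) :
    ∑ i ∈ S, p i ≤ ∑ i ∈ A, p i := by
  have h1 : (S \ A).card = (A \ S).card := by
    have h2 := Finset.card_sdiff_add_card_inter S A
    have h3 := Finset.card_sdiff_add_card_inter A S
    rw [Finset.inter_comm] at h3
    omega
  have key : ∑ i ∈ S \ A, p i ≤ ∑ i ∈ A \ S, p i := by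
    have e := Finset.equivOfCardEq h1
    calc ∑ i ∈ S \ A, p i = ∑ x : (S \ A : Finset (Fin N)), p x :=
          (Finset.sum_coe_sort _ _).symm
      _ = ∑ y : (A \ S : Finset (Fin N)), p (e.symm y) := (e.symm.sum_comp _).symm
      _ ≤ ∑ y : (A \ S : Finset (Fin N)), p y := by
          apply Finset.sum_le_sum
          intro y _
          have hmem : ((e.symm y : (S \ A : Finset (Fin N))) : Fin N) ∈ S \ A :=
            (e.symm y).2
          have hyS : (y : Fin N) ∉ S := (Finset.mem_sdiff.mp y.2).2
          exact hbot _ (Finset.mem_sdiff.mp hmem).1 _ hyS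
      _ = ∑ i ∈ A \ S, p i := Finset.sum_coe_sort _ _
  have hS : ∑ i ∈ S \ A, p i + ∑ i ∈ S ∩ A, p i = ∑ i ∈ S, p i := by
    rw [← Finset.sdiff_inter_self_left S A]
    exact Finset.sum_sdiff Finset.inter_subset_left
  have hA : ∑ i ∈ A \ S, p i + ∑ i ∈ S ∩ A, p i = ∑ i ∈ A, p i := by
    rw [Finset.inter_comm, ← Finset.sdiff_inter_self_left A S]
    exact Finset.sum_sdiff Finset.inter_subset_left
  linarith

/-- exact one-period decomposition for the big portfolio into relative price change plus a nonpositive crossover term. -/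
theorem big_portfolio_one_period_decomposition
    (N c : ℕ) (hc : 1 ≤ c) (hcN : c < N)
    (p : ℕ → Fin N → ℝ) (hp : ∀ t i, 0 < p t i)
    (S : ℕ → Finset (Fin N)) (hScard : ∀ t, (S t).card = N - c)
    (hbot : ∀ t, ∀ i ∈ S t, ∀ j ∉ S t, p t i ≤ p t j)
    (Vm B G Θs Θb Vs Vb C : ℕ → ℝ)
    (hVm : ∀ t, Vm t = ∑ i, p t i)
    (hB : ∀ t, B t = ∑ i ∈ S t, p t i)
    (hG : ∀ t, G t = ∑ i ∈ (S t)ᶜ, p t i)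
    (hΘs : ∀ t, Θs t = B t / Vm t)
    (hΘb : ∀ t, Θb t = G t / Vm t)
    (hVs0 : Vs 0 = Vm 0)
    (hVs : ∀ t, Vs (t + 1) = Vs t * (∑ i ∈ S t, p (t + 1) i) / B t)
    (hVb0 : Vb 0 = Vm 0)
    (hVb : ∀ t, Vb (t + 1) = Vb t * (∑ i ∈ (S t)ᶜ, p (t + 1) i) / G t)
    (hC : ∀ t, C t = (∑ i ∈ S t, p (t + 1) i) - B (t + 1)) :
    ∀ t, 0 ≤ C t ∧ C t < G (t + 1) ∧
      Real.log (Vb (t + 1) / Vb t) - Real.log (Vm (t + 1) / Vm t) =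
        (Real.log (Θb (t + 1)) - Real.log (Θb t)) + Real.log (1 - C t / G (t + 1)) ∧
      Real.log (1 - C t / G (t + 1)) ≤ 0 := by
  -- basic positivity
  have hScompl_card : ∀ t, ((S t)ᶜ).card = c := by
    intro t
    have := Finset.card_compl (S t)
    rw [hScard t] at this
    simp only [Fintype.card_fin] at this
    omega
  have hSne : ∀ t, (S t).Nonempty := by
    intro t
    rw [← Finset.card_pos, hScard t]; omega
  have hScne : ∀ t, ((S t)ᶜ).Nonempty := by
    intro t
    rw [← Finset.card_pos, hScompl_card t]; omega
  have hBpos : ∀ t, 0 < B t := fun t => by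
    rw [hB t]; exact Finset.sum_pos (fun i _ => hp t i) (hSne t)
  have hGpos : ∀ t, 0 < G t := fun t => by
    rw [hG t]; exact Finset.sum_pos (fun i _ => hp t i) (hScne t)
  haveI : Nonempty (Fin N) := Fin.pos_iff_nonempty.mp (by omega)
  have hVmpos : ∀ t, 0 < Vm t := fun t => by
    rw [hVm t]
    exact Finset.sum_pos (fun i _ => hp t i) Finset.univ_nonempty
  have hSGpos : ∀ t, 0 < ∑ i ∈ (S t)ᶜ, p (t + 1) i := fun t =>
    Finset.sum_pos (fun i _ => hp (t + 1) i) (hScne t)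
  have hSBpos : ∀ t, 0 < ∑ i ∈ S t, p (t + 1) i := fun t =>
    Finset.sum_pos (fun i _ => hp (t + 1) i) (hSne t)
  have hVbpos : ∀ t, 0 < Vb t := by
    intro t
    induction t with
    | zero => rw [hVb0]; exact hVmpos 0
    | succ n ih =>
        rw [hVb n]
        exact div_pos (mul_pos ih (hSGpos n)) (hGpos n)
  -- key split: Vm = B + G
  have hsplit : ∀ t, Vm t = B t + G t := by
    intro t
    rw [hVm t, hB t, hG t]
    exact (Finset.sum_add_sum_compl (S t) _).symm
  intro t
  -- C t ≥ 0
  have hCeq : C t = (∑ i ∈ S t, p (t + 1) i) - B (t + 1) := hC t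
  have hC0 : 0 ≤ C t := by
    rw [hCeq, sub_nonneg, hB (t + 1)]
    exact sum_bot_le_aux (p (t + 1)) (S (t + 1)) (S t)
      (by rw [hScard, hScard]) (hbot (t + 1))
  -- alternative form: G (t+1) - C t = ∑_{(S t)ᶜ} p (t+1)
  have hGC : G (t + 1) - C t = ∑ i ∈ (S t)ᶜ, p (t + 1) i := by
    have h1 : B (t + 1) + G (t + 1) = (∑ i ∈ S t, p (t + 1) i) + ∑ i ∈ (S t)ᶜ, p (t + 1) i := by
      rw [hB (t + 1), hG (t + 1), Finset.sum_add_sum_compl, Finset.sum_add_sum_compl]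
    rw [hCeq]; linarith
  have hClt : C t < G (t + 1) := by
    have := hSGpos t; linarith
  refine ⟨hC0, hClt, ?_, ?_⟩
  · -- main log identity
    have hGnz : G (t + 1) ≠ 0 := (hGpos (t + 1)).ne'
    have hfrac : 1 - C t / G (t + 1) = (∑ i ∈ (S t)ᶜ, p (t + 1) i) / G (t + 1) := by
      field_simp
      linarith [hGC]
    have hVbr : Vb (t + 1) / Vb t = (∑ i ∈ (S t)ᶜ, p (t + 1) i) / G t := by
      rw [hVb t, div_div, mul_comm (G t), mul_div_mul_left _ _ (hVbpos t).ne']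
    rw [hVbr, hfrac, hΘb (t + 1), hΘb t,
      Real.log_div (hSGpos t).ne' (hGpos t).ne',
      Real.log_div (hVmpos (t + 1)).ne' (hVmpos t).ne',
      Real.log_div (hGpos (t + 1)).ne' (hVmpos (t + 1)).ne',
      Real.log_div (hGpos t).ne' (hVmpos t).ne',
      Real.log_div (hSGpos t).ne' (hGpos (t + 1)).ne']
    ring
  · -- crossover term nonpositive
    apply Real.log_nonpos
    · have := (div_le_one (hGpos (t + 1))).mpr hClt.le
      linarith
    · have : 0 ≤ C t / G (t + 1) := div_nonneg hC0 (hGpos (t + 1)).le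
      linarith
end

section
/- Discrete-time analogue of Theorem 1, equation (13): for every time T, log V_s(T) − log V_m(T) = Σ_{t=0}^{T−1} log(1 + C(t)/B(t+1)) + log Θ_s(T) − log Θ_s(0), where each summand log(1 + C(t)/B(t+1)) is nonnegative. Thus the cumulative return of the small portfolio relative to the market decomposes exactly into accumulated rank crossovers plus the change in the log relative price of the bottom-ranked asset subset. -/
lemma bottom_sum_le' {N : ℕ} (q : Fin N → ℝ) (A B : Finset (Fin N))
    (hcard : A.card = B.card)
    (hA : ∀ i ∈ A, ∀ j ∉ A, q i ≤ q j) :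
    ∑ i ∈ A, q i ≤ ∑ i ∈ B, q i := by
  have h1 : ∑ i ∈ A, q i = ∑ i ∈ A ∩ B, q i + ∑ i ∈ A \ B, q i :=
    (Finset.sum_inter_add_sum_sdiff A B q).symm
  have h2 : ∑ i ∈ B, q i = ∑ i ∈ B ∩ A, q i + ∑ i ∈ B \ A, q i :=
    (Finset.sum_inter_add_sum_sdiff B A q).symm
  rw [Finset.inter_comm] at h2
  have hcd : (A \ B).card = (B \ A).card := Finset.card_sdiff_comm hcard
  have e := Finset.equivOfCardEq hcd
  have key : ∑ i ∈ A \ B, q i ≤ ∑ i ∈ B \ A, q i := by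
    rw [← Finset.sum_coe_sort (A \ B) q, ← Finset.sum_coe_sort (B \ A) q,
      ← Equiv.sum_comp e (fun x => q x)]
    apply Finset.sum_le_sum
    intro x _
    have hx : (x : Fin N) ∈ A := (Finset.mem_sdiff.mp x.2).1
    have hex : ((e x : Fin N)) ∉ A := (Finset.mem_sdiff.mp (e x).2).2
    exact hA x hx _ hex
  linarith

/-- discrete analogue of Theorem 1, eq. (13): cumulative relative return of the small portfolio = accumulated rank crossovers + change in log relative price of the bottom-ranked subset, with nonnegative crossover summands. -/
theorem small_portfolio_cumulative_decomposition
    (N c : ℕ) (hc : 1 ≤ c) (hcN : c < N)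
    (p : ℕ → Fin N → ℝ) (hp : ∀ t i, 0 < p t i)
    (S : ℕ → Finset (Fin N)) (hScard : ∀ t, (S t).card = N - c)
    (hbot : ∀ t, ∀ i ∈ S t, ∀ j ∉ S t, p t i ≤ p t j)
    (Vm B G Θs Θb Vs Vb C : ℕ → ℝ)
    (hVm : ∀ t, Vm t = ∑ i, p t i)
    (hB : ∀ t, B t = ∑ i ∈ S t, p t i)
    (hG : ∀ t, G t = ∑ i ∈ (S t)ᶜ, p t i)
    (hΘs : ∀ t, Θs t = B t / Vm t)
    (hΘb : ∀ t, Θb t = G t / Vm t)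
    (hVs0 : Vs 0 = Vm 0)
    (hVs : ∀ t, Vs (t + 1) = Vs t * (∑ i ∈ S t, p (t + 1) i) / B t)
    (hVb0 : Vb 0 = Vm 0)
    (hVb : ∀ t, Vb (t + 1) = Vb t * (∑ i ∈ (S t)ᶜ, p (t + 1) i) / G t)
    (hC : ∀ t, C t = (∑ i ∈ S t, p (t + 1) i) - B (t + 1)) :
    ∀ T, Real.log (Vs T) - Real.log (Vm T) =
        (∑ t ∈ Finset.range T, Real.log (1 + C t / B (t + 1))) +
          Real.log (Θs T) - Real.log (Θs 0) ∧
      ∀ t, 0 ≤ Real.log (1 + C t / B (t + 1)) := by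
  have hN : 0 < N := lt_of_le_of_lt (Nat.zero_le c) hcN
  have hSne : ∀ t, (S t).Nonempty := fun t =>
    Finset.card_pos.mp (by rw [hScard]; omega)
  have hBpos : ∀ t, 0 < B t := fun t => by
    rw [hB]; exact Finset.sum_pos (fun i _ => hp t i) (hSne t)
  have hXpos : ∀ t, 0 < ∑ i ∈ S t, p (t + 1) i := fun t =>
    Finset.sum_pos (fun i _ => hp _ i) (hSne t)
  have hVmpos : ∀ t, 0 < Vm t := fun t => by
    rw [hVm]; exact Finset.sum_pos (fun i _ => hp t i) ⟨⟨0, hN⟩, Finset.mem_univ _⟩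
  have hVspos : ∀ t, 0 < Vs t := by
    intro t
    induction t with
    | zero => rw [hVs0]; exact hVmpos 0
    | succ n ih =>
      rw [hVs n]
      exact div_pos (mul_pos ih (hXpos n)) (hBpos n)
  have hCnonneg : ∀ t, 0 ≤ C t := by
    intro t
    rw [hC, sub_nonneg, hB]
    exact bottom_sum_le' (p (t + 1)) (S (t + 1)) (S t)
      (by rw [hScard, hScard]) (hbot (t + 1))
  have hnn : ∀ t, 0 ≤ Real.log (1 + C t / B (t + 1)) := by
    intro t
    apply Real.log_nonneg
    have := div_nonneg (hCnonneg t) (hBpos (t + 1)).le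
    linarith
  have key : ∀ t, 1 + C t / B (t + 1) = (∑ i ∈ S t, p (t + 1) i) / B (t + 1) := by
    intro t
    have hb := (hBpos (t + 1)).ne'
    rw [hC]
    field_simp
    ring
  have hΘpos : ∀ t, 0 < Θs t := fun t => by
    rw [hΘs]; exact div_pos (hBpos t) (hVmpos t)
  intro T
  refine ⟨?_, hnn⟩
  induction T with
  | zero => rw [hVs0, Finset.sum_range_zero]; ring
  | succ T ih =>
    rw [Finset.sum_range_succ]
    have hlogVs : Real.log (Vs (T + 1)) =
        Real.log (Vs T) + Real.log (∑ i ∈ S T, p (T + 1) i) - Real.log (B T) := by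
      rw [hVs T, Real.log_div (mul_pos (hVspos T) (hXpos T)).ne' (hBpos T).ne',
        Real.log_mul (hVspos T).ne' (hXpos T).ne']
    have hlogΘ : ∀ t, Real.log (Θs t) = Real.log (B t) - Real.log (Vm t) := fun t => by
      rw [hΘs, Real.log_div (hBpos t).ne' (hVmpos t).ne']
    have hlogC : Real.log (1 + C T / B (T + 1)) =
        Real.log (∑ i ∈ S T, p (T + 1) i) - Real.log (B (T + 1)) := by
      rw [key, Real.log_div (hXpos T).ne' (hBpos (T + 1)).ne']
    rw [hlogVs, hlogC, hlogΘ (T + 1)]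
    linarith [ih, hlogΘ T]
end

section
/- Discrete-time analogue of Theorem 1, equation (14): for every time T, log V_b(T) − log V_m(T) = Σ_{t=0}^{T−1} log(1 − C(t)/G(t+1)) + log Θ_b(T) − log Θ_b(0), where each summand log(1 − C(t)/G(t+1)) is well defined (since 0 ≤ C(t) < G(t+1)) and nonpositive. Thus the cumulative return of the big portfolio relative to the market decomposes exactly into accumulated (negative) rank crossovers plus the change in the log relative price of the top-ranked asset subset. -/
lemma sum_min_subset_aux {ι : Type*} [DecidableEq ι] (s t : Finset ι) (f : ι → ℝ)
    (hcard : s.card = t.card) (h : ∀ i ∈ s, ∀ j ∈ t, f i ≤ f j) :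
    ∑ i ∈ s, f i ≤ ∑ j ∈ t, f j := by
  rcases t.eq_empty_or_nonempty with ht | ht
  · subst ht
    simp only [Finset.card_empty] at hcard
    simp [Finset.card_eq_zero.mp hcard]
  · obtain ⟨j0, hj0, hmin⟩ := t.exists_min_image f ht
    calc ∑ i ∈ s, f i ≤ s.card • f j0 :=
          Finset.sum_le_card_nsmul s f (f j0) (fun i hi => h i hi j0 hj0)
      _ = t.card • f j0 := by rw [hcard]
      _ ≤ ∑ j ∈ t, f j := Finset.card_nsmul_le_sum t f (f j0) (fun j hj => hmin j hj)

/-- discrete analogue of Theorem 1, eq. (14): cumulative relative return of the big portfolio = accumulated (negative) rank crossovers + change in log relative price of the top-ranked subset, with well-defined nonpositive crossover summands. -/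
theorem big_portfolio_cumulative_decomposition
    (N c : ℕ) (hc : 1 ≤ c) (hcN : c < N)
    (p : ℕ → Fin N → ℝ) (hp : ∀ t i, 0 < p t i)
    (S : ℕ → Finset (Fin N)) (hScard : ∀ t, (S t).card = N - c)
    (hbot : ∀ t, ∀ i ∈ S t, ∀ j ∉ S t, p t i ≤ p t j)
    (Vm B G Θs Θb Vs Vb C : ℕ → ℝ)
    (hVm : ∀ t, Vm t = ∑ i, p t i)
    (hB : ∀ t, B t = ∑ i ∈ S t, p t i)
    (hG : ∀ t, G t = ∑ i ∈ (S t)ᶜ, p t i)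
    (hΘs : ∀ t, Θs t = B t / Vm t)
    (hΘb : ∀ t, Θb t = G t / Vm t)
    (hVs0 : Vs 0 = Vm 0)
    (hVs : ∀ t, Vs (t + 1) = Vs t * (∑ i ∈ S t, p (t + 1) i) / B t)
    (hVb0 : Vb 0 = Vm 0)
    (hVb : ∀ t, Vb (t + 1) = Vb t * (∑ i ∈ (S t)ᶜ, p (t + 1) i) / G t)
    (hC : ∀ t, C t = (∑ i ∈ S t, p (t + 1) i) - B (t + 1)) :
    ∀ T, Real.log (Vb T) - Real.log (Vm T) =
        (∑ t ∈ Finset.range T, Real.log (1 - C t / G (t + 1))) +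
          Real.log (Θb T) - Real.log (Θb 0) ∧
      ∀ t, (0 ≤ C t ∧ C t < G (t + 1)) ∧ Real.log (1 - C t / G (t + 1)) ≤ 0 := by
  have hNpos : 0 < N := lt_of_le_of_lt (Nat.zero_le c) hcN
  have hVmpos : ∀ t, 0 < Vm t := fun t => by
    rw [hVm]
    exact Finset.sum_pos (fun i _ => hp t i) (Finset.univ_nonempty_iff.mpr ⟨⟨0, hNpos⟩⟩)
  have hcomplcard : ∀ t, ((S t)ᶜ).card = c := fun t => by
    rw [Finset.card_compl, hScard, Fintype.card_fin]; omega
  have hGpos : ∀ t, 0 < G t := fun t => by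
    rw [hG]
    exact Finset.sum_pos (fun i _ => hp t i)
      (Finset.card_pos.mp (by rw [hcomplcard]; omega))
  have hsumpos : ∀ t, 0 < ∑ i ∈ (S t)ᶜ, p (t + 1) i := fun t =>
    Finset.sum_pos (fun i _ => hp (t + 1) i)
      (Finset.card_pos.mp (by rw [hcomplcard]; omega))
  have hsplit : ∀ t s, (∑ i ∈ S s, p t i) + ∑ i ∈ (S s)ᶜ, p t i = Vm t := fun t s => by
    rw [hVm]; exact Finset.sum_add_sum_compl _ _
  have hCG : ∀ t, C t = G (t + 1) - ∑ i ∈ (S t)ᶜ, p (t + 1) i := fun t => by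
    have h1 := hsplit (t + 1) t
    have h2 := hsplit (t + 1) (t + 1)
    have hb := hB (t + 1)
    have hg := hG (t + 1)
    have hc := hC t
    linarith
  have hC0 : ∀ t, 0 ≤ C t := fun t => by
    rw [hC t, hB (t + 1), sub_nonneg]
    have key : ∑ i ∈ S (t + 1) \ S t, p (t + 1) i ≤ ∑ i ∈ S t \ S (t + 1), p (t + 1) i := by
      apply sum_min_subset_aux
      · have h1 := Finset.card_inter_add_card_sdiff (S (t + 1)) (S t)
        have h2 := Finset.card_inter_add_card_sdiff (S t) (S (t + 1))
        have h3 : (S (t + 1) ∩ S t).card = (S t ∩ S (t + 1)).card := by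
          rw [Finset.inter_comm]
        have h4 := hScard t
        have h5 := hScard (t + 1)
        omega
      · intro i hi j hj
        exact hbot (t + 1) i (Finset.mem_sdiff.mp hi).1 j (Finset.mem_sdiff.mp hj).2
    have e1 := Finset.sum_inter_add_sum_sdiff (S (t + 1)) (S t) (p (t + 1))
    have e2 := Finset.sum_inter_add_sum_sdiff (S t) (S (t + 1)) (p (t + 1))
    have e3 : ∑ i ∈ S (t + 1) ∩ S t, p (t + 1) i = ∑ i ∈ S t ∩ S (t + 1), p (t + 1) i := by
      rw [Finset.inter_comm]
    linarith
  have hClt : ∀ t, C t < G (t + 1) := fun t => by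
    have := hCG t; have := hsumpos t; linarith
  have hVbpos : ∀ t, 0 < Vb t := by
    intro t
    induction t with
    | zero => rw [hVb0]; exact hVmpos 0
    | succ t ih =>
      rw [hVb t]
      exact div_pos (mul_pos ih (hsumpos t)) (hGpos t)
  have hΘlog : ∀ s, Real.log (Θb s) = Real.log (G s) - Real.log (Vm s) := fun s => by
    rw [hΘb, Real.log_div (ne_of_gt (hGpos s)) (ne_of_gt (hVmpos s))]
  intro T
  constructor
  · induction T with
    | zero => simp [hVb0]
    | succ T ih =>
      have hG1 := hGpos (T + 1)
      have hGT := hGpos T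
      have hVbT := hVbpos T
      have hsp := hsumpos T
      have hstep : Real.log (Vb (T + 1)) =
          Real.log (Vb T) + Real.log (∑ i ∈ (S T)ᶜ, p (T + 1) i) - Real.log (G T) := by
        rw [hVb T, Real.log_div (by positivity) (ne_of_gt hGT),
          Real.log_mul (ne_of_gt hVbT) (ne_of_gt hsp)]
      have hlog1 : Real.log (1 - C T / G (T + 1)) =
          Real.log (∑ i ∈ (S T)ᶜ, p (T + 1) i) - Real.log (G (T + 1)) := by
        have heq : 1 - C T / G (T + 1) = (∑ i ∈ (S T)ᶜ, p (T + 1) i) / G (T + 1) := by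
          have := hCG T
          field_simp
          linarith
        rw [heq, Real.log_div (ne_of_gt hsp) (ne_of_gt hG1)]
      rw [Finset.sum_range_succ, hstep, hlog1, hΘlog (T + 1)]
      rw [hΘlog T] at ih
      linarith
  · intro t
    refine ⟨⟨hC0 t, hClt t⟩, ?_⟩
    apply Real.log_nonpos
    · have h1 : C t / G (t + 1) < 1 := (div_lt_one (hGpos (t + 1))).mpr (hClt t)
      linarith
    · have h2 : 0 ≤ C t / G (t + 1) := div_nonneg (hC0 t) (le_of_lt (hGpos (t + 1)))
      linarith
end

section
/- Discrete-time analogue of Corollary 1, equation (15): for every time T, log V_s(T) − log V_b(T) = Σ_{t=0}^{T−1} [log(1 + C(t)/B(t+1)) − log(1 − C(t)/G(t+1))] + log(Θ_s(T)/Θ_b(T)) − log(Θ_s(0)/Θ_b(0)), where each summand of the crossover sum is nonnegative. Thus the cumulative return of the small portfolio relative to the big portfolio decomposes exactly into accumulated rank crossovers plus the change in the log price of bottom-ranked assets relative to top-ranked assets. -/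
lemma sum_le_sum_of_pointwise {α : Type*} (f : α → ℝ) (s t : Finset α)
    (hcard : s.card = t.card) (h : ∀ x ∈ s, ∀ y ∈ t, f x ≤ f y) :
    ∑ x ∈ s, f x ≤ ∑ y ∈ t, f y := by
  rcases s.eq_empty_or_nonempty with hs | hs
  · have : t = ∅ := Finset.card_eq_zero.mp (by rw [← hcard, hs]; simp)
    simp [hs, this]
  · have ht : t.Nonempty := Finset.card_pos.mp (hcard ▸ Finset.card_pos.mpr hs)
    calc ∑ x ∈ s, f x ≤ s.card • t.inf' ht f :=
          Finset.sum_le_card_nsmul s f _ (fun x hx => Finset.le_inf' ht f (fun y hy => h x hx y hy))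
      _ = t.card • t.inf' ht f := by rw [hcard]
      _ ≤ ∑ y ∈ t, f y :=
          Finset.card_nsmul_le_sum t f _ (fun y hy => Finset.inf'_le f hy)

lemma bot_sum_le {N : ℕ} (f : Fin N → ℝ) (A A' : Finset (Fin N))
    (hcard : A.card = A'.card) (h : ∀ i ∈ A, ∀ j ∉ A, f i ≤ f j) :
    ∑ i ∈ A, f i ≤ ∑ i ∈ A', f i := by
  have h1 : (A \ A').card = (A' \ A).card := by
    have e1 := Finset.card_sdiff_add_card_inter A A'
    have e2 := Finset.card_sdiff_add_card_inter A' A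
    rw [Finset.inter_comm] at e2
    omega
  have h2 : ∑ i ∈ A \ A', f i ≤ ∑ i ∈ A' \ A, f i :=
    sum_le_sum_of_pointwise f _ _ h1
      (fun x hx y hy => h x (Finset.mem_sdiff.mp hx).1 y (Finset.mem_sdiff.mp hy).2)
  have e1 := Finset.sum_inter_add_sum_sdiff A A' f
  have e2 := Finset.sum_inter_add_sum_sdiff A' A f
  rw [Finset.inter_comm] at e2
  linarith

/-- discrete analogue of Corollary 1, eq. (15): cumulative return of small relative to big = accumulated rank crossovers + change in log relative price of the bottom-ranked versus top-ranked subsets, with nonnegative crossover summands. -/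
theorem small_vs_big_cumulative_decomposition
    (N c : ℕ) (hc : 1 ≤ c) (hcN : c < N)
    (p : ℕ → Fin N → ℝ) (hp : ∀ t i, 0 < p t i)
    (S : ℕ → Finset (Fin N)) (hScard : ∀ t, (S t).card = N - c)
    (hbot : ∀ t, ∀ i ∈ S t, ∀ j ∉ S t, p t i ≤ p t j)
    (Vm B G Θs Θb Vs Vb C : ℕ → ℝ)
    (hVm : ∀ t, Vm t = ∑ i, p t i)
    (hB : ∀ t, B t = ∑ i ∈ S t, p t i)
    (hG : ∀ t, G t = ∑ i ∈ (S t)ᶜ, p t i)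
    (hΘs : ∀ t, Θs t = B t / Vm t)
    (hΘb : ∀ t, Θb t = G t / Vm t)
    (hVs0 : Vs 0 = Vm 0)
    (hVs : ∀ t, Vs (t + 1) = Vs t * (∑ i ∈ S t, p (t + 1) i) / B t)
    (hVb0 : Vb 0 = Vm 0)
    (hVb : ∀ t, Vb (t + 1) = Vb t * (∑ i ∈ (S t)ᶜ, p (t + 1) i) / G t)
    (hC : ∀ t, C t = (∑ i ∈ S t, p (t + 1) i) - B (t + 1)) :
    ∀ T, Real.log (Vs T) - Real.log (Vb T) =
        (∑ t ∈ Finset.range T,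
            (Real.log (1 + C t / B (t + 1)) - Real.log (1 - C t / G (t + 1)))) +
          Real.log (Θs T / Θb T) - Real.log (Θs 0 / Θb 0) ∧
      ∀ t, 0 ≤ Real.log (1 + C t / B (t + 1)) - Real.log (1 - C t / G (t + 1)) := by
  have hNfin : Nonempty (Fin N) := ⟨⟨0, by omega⟩⟩
  have hSnon : ∀ t, (S t).Nonempty := fun t =>
    Finset.card_pos.mp (by rw [hScard]; omega)
  have hScnon : ∀ t, ((S t)ᶜ).Nonempty := fun t =>
    Finset.card_pos.mp (by rw [Finset.card_compl, hScard, Fintype.card_fin]; omega)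
  have hBpos : ∀ t, 0 < B t := fun t => by
    rw [hB]; exact Finset.sum_pos (fun i _ => hp t i) (hSnon t)
  have hGpos : ∀ t, 0 < G t := fun t => by
    rw [hG]; exact Finset.sum_pos (fun i _ => hp t i) (hScnon t)
  have hsS : ∀ t, 0 < ∑ i ∈ S t, p (t + 1) i := fun t =>
    Finset.sum_pos (fun i _ => hp _ i) (hSnon t)
  have hsSc : ∀ t, 0 < ∑ i ∈ (S t)ᶜ, p (t + 1) i := fun t =>
    Finset.sum_pos (fun i _ => hp _ i) (hScnon t)
  have hVmpos : ∀ t, 0 < Vm t := fun t => by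
    rw [hVm]; exact Finset.sum_pos (fun i _ => hp t i) Finset.univ_nonempty
  have hVspos : ∀ t, 0 < Vs t := by
    intro t
    induction t with
    | zero => rw [hVs0]; exact hVmpos 0
    | succ t ih =>
        rw [hVs]
        exact div_pos (mul_pos ih (hsS t)) (hBpos t)
  have hVbpos : ∀ t, 0 < Vb t := by
    intro t
    induction t with
    | zero => rw [hVb0]; exact hVmpos 0
    | succ t ih =>
        rw [hVb]
        exact div_pos (mul_pos ih (hsSc t)) (hGpos t)
  have hCeq2 : ∀ t, C t = G (t + 1) - ∑ i ∈ (S t)ᶜ, p (t + 1) i := by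
    intro t
    have h1 : (∑ i ∈ S t, p (t + 1) i) + ∑ i ∈ (S t)ᶜ, p (t + 1) i
        = (∑ i ∈ S (t + 1), p (t + 1) i) + ∑ i ∈ (S (t + 1))ᶜ, p (t + 1) i := by
      rw [Finset.sum_add_sum_compl, Finset.sum_add_sum_compl]
    rw [hC, hB, hG]
    linarith
  have hCnn : ∀ t, 0 ≤ C t := by
    intro t
    rw [hC, hB]
    have := bot_sum_le (p (t + 1)) (S (t + 1)) (S t)
      (by rw [hScard, hScard]) (hbot (t + 1))
    linarith
  have hCltG : ∀ t, C t < G (t + 1) := fun t => by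
    rw [hCeq2]; linarith [hsSc t]
  have key1 : ∀ t, 1 + C t / B (t + 1) = (∑ i ∈ S t, p (t + 1) i) / B (t + 1) := by
    intro t
    have hb := (hBpos (t + 1)).ne'
    rw [hC]
    field_simp
    ring
  have key2 : ∀ t, 1 - C t / G (t + 1) = (∑ i ∈ (S t)ᶜ, p (t + 1) i) / G (t + 1) := by
    intro t
    have hg := (hGpos (t + 1)).ne'
    rw [hCeq2]
    field_simp
    ring
  have hD : ∀ t, Real.log (1 + C t / B (t + 1)) - Real.log (1 - C t / G (t + 1)) =
      (Real.log (∑ i ∈ S t, p (t + 1) i) - Real.log (B (t + 1))) -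
      (Real.log (∑ i ∈ (S t)ᶜ, p (t + 1) i) - Real.log (G (t + 1))) := by
    intro t
    rw [key1 t, key2 t, Real.log_div (hsS t).ne' (hBpos (t + 1)).ne',
      Real.log_div (hsSc t).ne' (hGpos (t + 1)).ne']
  have hnn : ∀ t, 0 ≤ Real.log (1 + C t / B (t + 1)) - Real.log (1 - C t / G (t + 1)) := by
    intro t
    have h1 : 0 ≤ Real.log (1 + C t / B (t + 1)) := by
      apply Real.log_nonneg
      have : 0 ≤ C t / B (t + 1) := div_nonneg (hCnn t) (hBpos (t + 1)).le
      linarith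
    have h2 : Real.log (1 - C t / G (t + 1)) ≤ 0 := by
      apply Real.log_nonpos
      · have : C t / G (t + 1) < 1 := (div_lt_one (hGpos (t + 1))).mpr (hCltG t)
        linarith
      · have : 0 ≤ C t / G (t + 1) := div_nonneg (hCnn t) (hGpos (t + 1)).le
        linarith
    linarith
  have hΘ : ∀ t, Real.log (Θs t / Θb t) = Real.log (B t) - Real.log (G t) := by
    intro t
    have h1 : Θs t / Θb t = B t / G t := by
      have hv := (hVmpos t).ne'
      rw [hΘs, hΘb]
      field_simp
    rw [h1, Real.log_div (hBpos t).ne' (hGpos t).ne']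
  intro T
  refine ⟨?_, hnn⟩
  induction T with
  | zero => rw [hVs0, hVb0]; simp
  | succ T ih =>
      have hs : Real.log (Vs (T + 1)) =
          Real.log (Vs T) + Real.log (∑ i ∈ S T, p (T + 1) i) - Real.log (B T) := by
        rw [hVs, Real.log_div (mul_ne_zero (hVspos T).ne' (hsS T).ne') (hBpos T).ne',
          Real.log_mul (hVspos T).ne' (hsS T).ne']
      have hb : Real.log (Vb (T + 1)) =
          Real.log (Vb T) + Real.log (∑ i ∈ (S T)ᶜ, p (T + 1) i) - Real.log (G T) := by
        rw [hVb, Real.log_div (mul_ne_zero (hVbpos T).ne' (hsSc T).ne') (hGpos T).ne',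
          Real.log_mul (hVbpos T).ne' (hsSc T).ne']
      rw [Finset.sum_range_succ, hs, hb, hD T, hΘ (T + 1)]
      rw [hΘ T, hΘ 0] at ih; rw [hΘ 0]
      linarith
end

section
/- The cumulative rank-crossover process of the small portfolio, K_s(T) := log(V_s(T)/V_m(T)) − (log Θ_s(T) − log Θ_s(0)), is nonnegative and nondecreasing in T (the discrete analogue of the statement that the adjusted local time ∫₀ᵀ dΛᶜ(t)/(2Θ_sc(t)) is a nondecreasing finite-variation process). -/
/-- The bottom-ranked subset minimizes the sum among equal-cardinality subsets. -/
lemma bottom_sum_min_s10 {N : ℕ} (q : Fin N → ℝ) (hq : ∀ i, 0 < q i)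
    (s a : Finset (Fin N)) (hcard : s.card = a.card)
    (hbot : ∀ i ∈ s, ∀ j ∉ s, q i ≤ q j) :
    ∑ i ∈ s, q i ≤ ∑ i ∈ a, q i := by
  have hdiff : ∑ i ∈ s \ a, q i ≤ ∑ i ∈ a \ s, q i := by
    have hcd : (s \ a).card = (a \ s).card := Finset.card_sdiff_comm hcard
    rcases Finset.eq_empty_or_nonempty (a \ s) with he | hne
    · have : (s \ a) = ∅ := Finset.card_eq_zero.mp (by rw [hcd, he]; simp)
      simp [this, he]
    · obtain ⟨j₀, hj₀, hj₀min⟩ := Finset.exists_min_image (a \ s) q hne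
      have h1 : ∑ i ∈ s \ a, q i ≤ (s \ a).card • q j₀ := by
        apply Finset.sum_le_card_nsmul
        intro i hi
        exact hbot i (Finset.mem_sdiff.mp hi).1 j₀ (Finset.mem_sdiff.mp hj₀).2
      have h2 : (a \ s).card • q j₀ ≤ ∑ i ∈ a \ s, q i :=
        Finset.card_nsmul_le_sum _ _ _ (fun i hi => hj₀min i hi)
      calc ∑ i ∈ s \ a, q i ≤ (s \ a).card • q j₀ := h1
        _ = (a \ s).card • q j₀ := by rw [hcd]
        _ ≤ ∑ i ∈ a \ s, q i := h2
  have hs := Finset.sum_inter_add_sum_sdiff s a q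
  have ha := Finset.sum_inter_add_sum_sdiff a s q
  rw [Finset.inter_comm] at ha
  linarith

/-- the cumulative rank-crossover process of the small portfolio is nonnegative and nondecreasing. -/
theorem small_crossover_process_monotone
    (N c : ℕ) (hc : 1 ≤ c) (hcN : c < N)
    (p : ℕ → Fin N → ℝ) (hp : ∀ t i, 0 < p t i)
    (S : ℕ → Finset (Fin N)) (hScard : ∀ t, (S t).card = N - c)
    (hbot : ∀ t, ∀ i ∈ S t, ∀ j ∉ S t, p t i ≤ p t j)
    (Vm B G Θs Θb Vs Vb C : ℕ → ℝ)
    (hVm : ∀ t, Vm t = ∑ i, p t i)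
    (hB : ∀ t, B t = ∑ i ∈ S t, p t i)
    (hG : ∀ t, G t = ∑ i ∈ (S t)ᶜ, p t i)
    (hΘs : ∀ t, Θs t = B t / Vm t)
    (hΘb : ∀ t, Θb t = G t / Vm t)
    (hVs0 : Vs 0 = Vm 0)
    (hVs : ∀ t, Vs (t + 1) = Vs t * (∑ i ∈ S t, p (t + 1) i) / B t)
    (hVb0 : Vb 0 = Vm 0)
    (hVb : ∀ t, Vb (t + 1) = Vb t * (∑ i ∈ (S t)ᶜ, p (t + 1) i) / G t)
    (hC : ∀ t, C t = (∑ i ∈ S t, p (t + 1) i) - B (t + 1))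
    (Ks : ℕ → ℝ)
    (hKs : ∀ T, Ks T = Real.log (Vs T / Vm T) - (Real.log (Θs T) - Real.log (Θs 0))) :
    (∀ T, 0 ≤ Ks T) ∧ Monotone Ks := by
  -- basic positivity
  have hSne : ∀ t, (S t).Nonempty := by
    intro t
    rw [← Finset.card_pos, hScard t]
    omega
  have hBpos : ∀ t, 0 < B t := by
    intro t
    rw [hB t]
    exact Finset.sum_pos (fun i _ => hp t i) (hSne t)
  have hXpos : ∀ t, 0 < ∑ i ∈ S t, p (t + 1) i := fun t =>
    Finset.sum_pos (fun i _ => hp (t + 1) i) (hSne t)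
  have hVmpos : ∀ t, 0 < Vm t := by
    intro t
    rw [hVm t]
    exact Finset.sum_pos (fun i _ => hp t i) ⟨⟨0, by omega⟩, Finset.mem_univ _⟩
  have hVspos : ∀ t, 0 < Vs t := by
    intro t
    induction t with
    | zero => rw [hVs0]; exact hVmpos 0
    | succ n ih =>
      rw [hVs n]
      exact div_pos (mul_pos ih (hXpos n)) (hBpos n)
  -- simplified expression for Ks
  have hKs' : ∀ T, Ks T = Real.log (Vs T) - Real.log (B T) + Real.log (Θs 0) := by
    intro T
    rw [hKs T, Real.log_div (ne_of_gt (hVspos T)) (ne_of_gt (hVmpos T)), hΘs T,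
      Real.log_div (ne_of_gt (hBpos T)) (ne_of_gt (hVmpos T))]
    ring
  -- the key step inequality
  have hstep : ∀ t, Ks t ≤ Ks (t + 1) := by
    intro t
    rw [hKs' t, hKs' (t + 1)]
    have hVs1 : Real.log (Vs (t + 1)) =
        Real.log (Vs t) + Real.log (∑ i ∈ S t, p (t + 1) i) - Real.log (B t) := by
      rw [hVs t, Real.log_div (ne_of_gt (mul_pos (hVspos t) (hXpos t))) (ne_of_gt (hBpos t)),
        Real.log_mul (ne_of_gt (hVspos t)) (ne_of_gt (hXpos t))]
    rw [hVs1]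
    have hkey : B (t + 1) ≤ ∑ i ∈ S t, p (t + 1) i := by
      rw [hB (t + 1)]
      exact bottom_sum_min_s10 (p (t + 1)) (hp (t + 1)) (S (t + 1)) (S t)
        (by rw [hScard, hScard]) (hbot (t + 1))
    have hlog : Real.log (B (t + 1)) ≤ Real.log (∑ i ∈ S t, p (t + 1) i) :=
      Real.log_le_log (hBpos (t + 1)) hkey
    linarith
  have hmono : Monotone Ks := monotone_nat_of_le_succ hstep
  have hKs0 : Ks 0 = 0 := by
    rw [hKs 0, hVs0, div_self (ne_of_gt (hVmpos 0))]
    simp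
  exact ⟨fun T => hKs0 ▸ hmono (Nat.zero_le T), hmono⟩
end

section
/- The cumulative rank-crossover process of the big portfolio, K_b(T) := log(V_b(T)/V_m(T)) − (log Θ_b(T) − log Θ_b(0)), is nonpositive and nonincreasing in T (the discrete analogue of the statement that −∫₀ᵀ dΛᶜ(t)/(2Θ_bc(t)) is a nonincreasing finite-variation process). -/
lemma key_sum_le {N : ℕ} (A B : Finset (Fin N)) (f : Fin N → ℝ)
    (hcard : A.card = B.card) (h : ∀ i ∉ B, ∀ j ∈ B, f i ≤ f j) :
    ∑ i ∈ A, f i ≤ ∑ i ∈ B, f i := by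
  have h1 : (A \ B).card = (B \ A).card := by
    have h2 := Finset.card_sdiff_add_card_inter A B
    have h3 := Finset.card_sdiff_add_card_inter B A
    rw [Finset.inter_comm B A] at h3
    omega
  have hAB : ∀ i ∈ A \ B, i ∉ B := fun i hi => (Finset.mem_sdiff.mp hi).2
  have hBA : ∀ j ∈ B \ A, j ∈ B := fun j hj => (Finset.mem_sdiff.mp hj).1
  have hdiff : ∑ i ∈ A \ B, f i ≤ ∑ i ∈ B \ A, f i := by
    have e := Finset.equivOfCardEq h1
    have h4 : ∑ i ∈ A \ B, f i = ∑ y : (B \ A : Finset (Fin N)), f (e.symm y) := by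
      rw [← Finset.sum_coe_sort (A \ B) f, ← Equiv.sum_comp e.symm (fun x : (A \ B : Finset (Fin N)) => f x)]
    rw [h4, ← Finset.sum_coe_sort (B \ A) f]
    apply Finset.sum_le_sum
    intro y _
    exact h _ (hAB _ (e.symm y).2) _ (hBA _ y.2)
  have hA := Finset.sum_inter_add_sum_sdiff A B f
  have hBsum := Finset.sum_inter_add_sum_sdiff B A f
  rw [Finset.inter_comm B A] at hBsum
  linarith

/-- the cumulative rank-crossover process of the big portfolio is nonpositive and nonincreasing. -/
theorem big_crossover_process_antitone
    (N c : ℕ) (hc : 1 ≤ c) (hcN : c < N)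
    (p : ℕ → Fin N → ℝ) (hp : ∀ t i, 0 < p t i)
    (S : ℕ → Finset (Fin N)) (hScard : ∀ t, (S t).card = N - c)
    (hbot : ∀ t, ∀ i ∈ S t, ∀ j ∉ S t, p t i ≤ p t j)
    (Vm B G Θs Θb Vs Vb C : ℕ → ℝ)
    (hVm : ∀ t, Vm t = ∑ i, p t i)
    (hB : ∀ t, B t = ∑ i ∈ S t, p t i)
    (hG : ∀ t, G t = ∑ i ∈ (S t)ᶜ, p t i)
    (hΘs : ∀ t, Θs t = B t / Vm t)
    (hΘb : ∀ t, Θb t = G t / Vm t)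
    (hVs0 : Vs 0 = Vm 0)
    (hVs : ∀ t, Vs (t + 1) = Vs t * (∑ i ∈ S t, p (t + 1) i) / B t)
    (hVb0 : Vb 0 = Vm 0)
    (hVb : ∀ t, Vb (t + 1) = Vb t * (∑ i ∈ (S t)ᶜ, p (t + 1) i) / G t)
    (hC : ∀ t, C t = (∑ i ∈ S t, p (t + 1) i) - B (t + 1))
    (Kb : ℕ → ℝ)
    (hKb : ∀ T, Kb T = Real.log (Vb T / Vm T) - (Real.log (Θb T) - Real.log (Θb 0))) :
    (∀ T, Kb T ≤ 0) ∧ Antitone Kb := by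
  have hNpos : 0 < N := lt_of_le_of_lt (Nat.zero_le c) hcN
  have hVmpos : ∀ t, 0 < Vm t := by
    intro t
    rw [hVm]
    apply Finset.sum_pos (fun i _ => hp t i)
    have : Nonempty (Fin N) := Fin.pos_iff_nonempty.mp hNpos
    exact Finset.univ_nonempty
  have hScne : ∀ t, ((S t)ᶜ : Finset (Fin N)).Nonempty := by
    intro t
    rw [← Finset.card_pos, Finset.card_compl, hScard, Fintype.card_fin]
    omega
  have hGpos : ∀ t, 0 < G t := by
    intro t; rw [hG]
    exact Finset.sum_pos (fun i _ => hp t i) (hScne t)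
  have hQpos : ∀ t, 0 < ∑ i ∈ (S t)ᶜ, p (t + 1) i := by
    intro t
    exact Finset.sum_pos (fun i _ => hp (t + 1) i) (hScne t)
  have hVbpos : ∀ t, 0 < Vb t := by
    intro t
    induction t with
    | zero => rw [hVb0]; exact hVmpos 0
    | succ n ih =>
      rw [hVb n]
      exact div_pos (mul_pos ih (hQpos n)) (hGpos n)
  -- rewrite Kb
  have hKb' : ∀ T, Kb T = Real.log (Vb T) - Real.log (G T) + Real.log (Θb 0) := by
    intro T
    rw [hKb, hΘb, Real.log_div (hVbpos T).ne' (hVmpos T).ne',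
      Real.log_div (hGpos T).ne' (hVmpos T).ne']
    ring
  have hstep : ∀ T, Kb (T + 1) ≤ Kb T := by
    intro T
    have hQle : (∑ i ∈ (S T)ᶜ, p (T + 1) i) ≤ G (T + 1) := by
      rw [hG]
      apply key_sum_le
      · rw [Finset.card_compl, Finset.card_compl, hScard, hScard]
      · intro i hi j hj
        rw [Finset.mem_compl, not_not] at hi
        rw [Finset.mem_compl] at hj
        exact hbot (T + 1) i hi j hj
    have hlog : Real.log (∑ i ∈ (S T)ᶜ, p (T + 1) i) ≤ Real.log (G (T + 1)) :=
      Real.log_le_log (hQpos T) hQle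
    have hVblog : Real.log (Vb (T + 1)) =
        Real.log (Vb T) + Real.log (∑ i ∈ (S T)ᶜ, p (T + 1) i) - Real.log (G T) := by
      rw [hVb T, Real.log_div (mul_pos (hVbpos T) (hQpos T)).ne' (hGpos T).ne',
        Real.log_mul (hVbpos T).ne' (hQpos T).ne']
    rw [hKb' (T + 1), hKb' T, hVblog]
    linarith
  have hanti : Antitone Kb := antitone_nat_of_succ_le hstep
  have hKb0 : Kb 0 = 0 := by
    rw [hKb, hVb0, div_self (hVmpos 0).ne']
    simp
  exact ⟨fun T => hKb0 ▸ hanti (Nat.zero_le T), hanti⟩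
end

section
/- Rank effect for the small portfolio: for any time T, if the relative price of the bottom-ranked subset has not fallen, i.e. Θ_s(T) ≥ Θ_s(0), then the small portfolio weakly outperforms the market: V_s(T) ≥ V_m(T). -/
/-- rank effect for the small portfolio: if the relative price of the bottom-ranked subset has not fallen, the small portfolio weakly outperforms the market. -/
theorem rank_effect_small_vs_market
    (N c : ℕ) (hc : 1 ≤ c) (hcN : c < N)
    (p : ℕ → Fin N → ℝ) (hp : ∀ t i, 0 < p t i)
    (S : ℕ → Finset (Fin N)) (hScard : ∀ t, (S t).card = N - c)
    (hbot : ∀ t, ∀ i ∈ S t, ∀ j ∉ S t, p t i ≤ p t j)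
    (Vm B G Θs Θb Vs Vb C : ℕ → ℝ)
    (hVm : ∀ t, Vm t = ∑ i, p t i)
    (hB : ∀ t, B t = ∑ i ∈ S t, p t i)
    (hG : ∀ t, G t = ∑ i ∈ (S t)ᶜ, p t i)
    (hΘs : ∀ t, Θs t = B t / Vm t)
    (hΘb : ∀ t, Θb t = G t / Vm t)
    (hVs0 : Vs 0 = Vm 0)
    (hVs : ∀ t, Vs (t + 1) = Vs t * (∑ i ∈ S t, p (t + 1) i) / B t)
    (hVb0 : Vb 0 = Vm 0)
    (hVb : ∀ t, Vb (t + 1) = Vb t * (∑ i ∈ (S t)ᶜ, p (t + 1) i) / G t)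
    (hC : ∀ t, C t = (∑ i ∈ S t, p (t + 1) i) - B (t + 1)) :
    ∀ T, Θs T ≥ Θs 0 → Vs T ≥ Vm T := by
  have hNpos : 0 < N := lt_of_le_of_lt (Nat.zero_le c) hcN
  have hSne : ∀ t, (S t).Nonempty := by
    intro t
    rw [← Finset.card_pos, hScard t]
    omega
  have hBpos : ∀ t, 0 < B t := by
    intro t
    rw [hB t]
    exact Finset.sum_pos (fun i _ => hp t i) (hSne t)
  have hVmpos : ∀ t, 0 < Vm t := by
    intro t
    rw [hVm t]
    exact Finset.sum_pos (fun i _ => hp t i)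
      (Finset.univ_nonempty_iff.mpr ⟨⟨0, hNpos⟩⟩)
  have hXpos : ∀ t, 0 < ∑ i ∈ S t, p (t + 1) i := by
    intro t
    exact Finset.sum_pos (fun i _ => hp (t+1) i) (hSne t)
  -- key: B(t+1) ≤ ∑_{i ∈ S t} p(t+1) i
  have hkey : ∀ t, B (t + 1) ≤ ∑ i ∈ S t, p (t + 1) i := by
    intro t
    rw [hB (t+1)]
    have hcardeq : (S (t+1)).card = (S t).card := by rw [hScard, hScard]
    have hsplit1 : ∑ i ∈ S (t+1), p (t+1) i =
        (∑ i ∈ S (t+1) ∩ S t, p (t+1) i) + ∑ i ∈ S (t+1) \ S t, p (t+1) i := by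
      rw [Finset.sum_inter_add_sum_sdiff]
    have hsplit2 : ∑ i ∈ S t, p (t+1) i =
        (∑ i ∈ S t ∩ S (t+1), p (t+1) i) + ∑ i ∈ S t \ S (t+1), p (t+1) i := by
      rw [Finset.sum_inter_add_sum_sdiff]
    rw [hsplit1, hsplit2, Finset.inter_comm]
    refine add_le_add_right ?_ _
    set A := S (t+1) \ S t with hA
    set D := S t \ S (t+1) with hD
    have hcardAD : A.card = D.card := Finset.card_sdiff_comm hcardeq
    rcases D.eq_empty_or_nonempty with hDe | hDne
    · have : A = ∅ := Finset.card_eq_zero.mp (by rw [hcardAD, hDe, Finset.card_empty])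
      simp [this, hDe]
    · have h1 : ∀ a ∈ A, ∀ d ∈ D, p (t+1) a ≤ p (t+1) d := by
        intro a ha d hd
        exact hbot (t+1) a (Finset.mem_sdiff.mp ha).1 d (Finset.mem_sdiff.mp hd).2
      obtain ⟨d0, hd0, hd0min⟩ := Finset.exists_min_image D (fun i => p (t+1) i) hDne
      calc ∑ i ∈ A, p (t+1) i ≤ ∑ _i ∈ A, p (t+1) d0 :=
            Finset.sum_le_sum (fun a ha => h1 a ha d0 hd0)
        _ = A.card * p (t+1) d0 := by rw [Finset.sum_const, nsmul_eq_mul]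
        _ = D.card * p (t+1) d0 := by rw [hcardAD]
        _ = ∑ _i ∈ D, p (t+1) d0 := by rw [Finset.sum_const, nsmul_eq_mul]
        _ ≤ ∑ i ∈ D, p (t+1) i := Finset.sum_le_sum (fun d hd => hd0min d hd)
  -- induction: Vs t ≥ Vm 0 * B t / B 0
  have hmain : ∀ t, Vs t ≥ Vm 0 * B t / B 0 := by
    intro t
    induction t with
    | zero =>
      rw [hVs0, mul_div_assoc, div_self (ne_of_gt (hBpos 0)), mul_one]
    | succ t ih =>
      rw [hVs t]
      have hX := hXpos t
      have hBt := hBpos t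
      have hB0 := hBpos 0
      have hVm0 := hVmpos 0
      have h2 : Vs t * (∑ i ∈ S t, p (t + 1) i) / B t ≥
          (Vm 0 * B t / B 0) * (∑ i ∈ S t, p (t + 1) i) / B t := by
        gcongr
      refine le_trans ?_ h2
      have h3 : (Vm 0 * B t / B 0) * (∑ i ∈ S t, p (t + 1) i) / B t
          = Vm 0 * (∑ i ∈ S t, p (t + 1) i) / B 0 := by
        field_simp
      rw [h3]
      have := hkey t
      apply div_le_div_of_nonneg_right (mul_le_mul_of_nonneg_left this (le_of_lt hVm0)) hB0.le
  intro T hT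
  have hBT := hBpos T
  have hB0 := hBpos 0
  have hVmT := hVmpos T
  have hVm0 := hVmpos 0
  rw [hΘs T, hΘs 0, ge_iff_le, div_le_div_iff₀ hVm0 hVmT] at hT
  have h4 : Vm T ≤ Vm 0 * B T / B 0 := by
    rw [le_div_iff₀ hB0]
    nlinarith
  exact le_trans h4 (hmain T)
end

section
/- Rank effect for the big portfolio: for any time T, if the relative price of the top-ranked subset has not risen, i.e. Θ_b(T) ≤ Θ_b(0), then the big portfolio weakly underperforms the market: V_b(T) ≤ V_m(T). -/
lemma sum_le_of_cross {ι : Type*} [DecidableEq ι] (A B : Finset ι) (f : ι → ℝ)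
    (hcard : A.card = B.card)
    (h : ∀ x ∈ A \ B, ∀ y ∈ B \ A, f x ≤ f y) :
    ∑ x ∈ A, f x ≤ ∑ x ∈ B, f x := by
  have hAB : (A \ B).card = (B \ A).card := Finset.card_sdiff_comm hcard
  have key : ∑ x ∈ A \ B, f x ≤ ∑ x ∈ B \ A, f x := by
    rcases (A \ B).eq_empty_or_nonempty with he | hne
    · have : (B \ A) = ∅ := Finset.card_eq_zero.mp (by rw [← hAB, he, Finset.card_empty])
      simp [he, this]
    · have hne' : (B \ A).Nonempty := Finset.card_pos.mp (by rw [← hAB]; exact Finset.card_pos.mpr hne)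
      have hm : ∀ x ∈ A \ B, f x ≤ (B \ A).inf' hne' f := by
        intro x hx
        exact Finset.le_inf' hne' f (fun y hy => h x hx y hy)
      calc ∑ x ∈ A \ B, f x ≤ (A \ B).card • (B \ A).inf' hne' f :=
            Finset.sum_le_card_nsmul _ _ _ hm
        _ = (B \ A).card • (B \ A).inf' hne' f := by rw [hAB]
        _ ≤ ∑ y ∈ B \ A, f y := Finset.card_nsmul_le_sum _ _ _ (fun y hy => Finset.inf'_le f hy)
  have hA : ∑ x ∈ A, f x = ∑ x ∈ A ∩ B, f x + ∑ x ∈ A \ B, f x :=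
    (Finset.sum_inter_add_sum_sdiff A B f).symm
  have hB : ∑ x ∈ B, f x = ∑ x ∈ A ∩ B, f x + ∑ x ∈ B \ A, f x := by
    rw [Finset.inter_comm]
    exact (Finset.sum_inter_add_sum_sdiff B A f).symm
  linarith

/-- rank effect for the big portfolio: if the relative price of the top-ranked subset has not risen, the big portfolio weakly underperforms the market. -/
theorem rank_effect_big_vs_market
    (N c : ℕ) (hc : 1 ≤ c) (hcN : c < N)
    (p : ℕ → Fin N → ℝ) (hp : ∀ t i, 0 < p t i)
    (S : ℕ → Finset (Fin N)) (hScard : ∀ t, (S t).card = N - c)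
    (hbot : ∀ t, ∀ i ∈ S t, ∀ j ∉ S t, p t i ≤ p t j)
    (Vm B G Θs Θb Vs Vb C : ℕ → ℝ)
    (hVm : ∀ t, Vm t = ∑ i, p t i)
    (hB : ∀ t, B t = ∑ i ∈ S t, p t i)
    (hG : ∀ t, G t = ∑ i ∈ (S t)ᶜ, p t i)
    (hΘs : ∀ t, Θs t = B t / Vm t)
    (hΘb : ∀ t, Θb t = G t / Vm t)
    (hVs0 : Vs 0 = Vm 0)
    (hVs : ∀ t, Vs (t + 1) = Vs t * (∑ i ∈ S t, p (t + 1) i) / B t)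
    (hVb0 : Vb 0 = Vm 0)
    (hVb : ∀ t, Vb (t + 1) = Vb t * (∑ i ∈ (S t)ᶜ, p (t + 1) i) / G t)
    (hC : ∀ t, C t = (∑ i ∈ S t, p (t + 1) i) - B (t + 1)) :
    ∀ T, Θb T ≤ Θb 0 → Vb T ≤ Vm T := by
  have hN : 0 < N := lt_of_le_of_lt (Nat.zero_le c) hcN
  have hcompl : ∀ t, ((S t)ᶜ : Finset (Fin N)).card = c := by
    intro t
    rw [Finset.card_compl, hScard, Fintype.card_fin]
    omega
  have hcne : ∀ t, ((S t)ᶜ : Finset (Fin N)).Nonempty := by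
    intro t
    apply Finset.card_pos.mp
    rw [hcompl]; omega
  have hGpos : ∀ t, 0 < G t := by
    intro t
    rw [hG]
    exact Finset.sum_pos (fun i _ => hp t i) (hcne t)
  have hVmpos : ∀ t, 0 < Vm t := by
    intro t
    rw [hVm]
    exact Finset.sum_pos (fun i _ => hp t i) ⟨⟨0, hN⟩, Finset.mem_univ _⟩
  -- key step: sum at t+1 over old top set ≤ G (t+1)
  have hstep : ∀ t, (∑ i ∈ (S t)ᶜ, p (t + 1) i) ≤ G (t + 1) := by
    intro t
    rw [hG]
    apply sum_le_of_cross _ _ _ (by rw [hcompl, hcompl])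
    intro x hx y hy
    rw [Finset.mem_sdiff, Finset.mem_compl, Finset.mem_compl, not_not] at hx
    rw [Finset.mem_sdiff, Finset.mem_compl] at hy
    exact hbot (t + 1) x hx.2 y hy.1
  have hXpos : ∀ t, 0 < ∑ i ∈ (S t)ᶜ, p (t + 1) i :=
    fun t => Finset.sum_pos (fun i _ => hp (t + 1) i) (hcne t)
  have main : ∀ t, 0 < Vb t ∧ Vb t * G 0 ≤ Vm 0 * G t := by
    intro t
    induction t with
    | zero => exact ⟨by rw [hVb0]; exact hVmpos 0, by rw [hVb0]⟩
    | succ t ih =>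
      obtain ⟨hpos, hle⟩ := ih
      have hGt := hGpos t
      have hX := hXpos t
      constructor
      · rw [hVb t]
        positivity
      · rw [hVb t, div_mul_eq_mul_div, div_le_iff₀ hGt]
        have h1 : Vb t * G 0 * (∑ i ∈ (S t)ᶜ, p (t + 1) i) ≤
            Vm 0 * G t * (∑ i ∈ (S t)ᶜ, p (t + 1) i) :=
          mul_le_mul_of_nonneg_right hle (le_of_lt hX)
        have h2 : Vm 0 * G t * (∑ i ∈ (S t)ᶜ, p (t + 1) i) ≤
            Vm 0 * G t * G (t + 1) :=
          mul_le_mul_of_nonneg_left (hstep t) (mul_nonneg (hVmpos 0).le hGt.le)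
        nlinarith
  intro T hT
  obtain ⟨hpos, hle⟩ := main T
  rw [hΘb T, hΘb 0, div_le_div_iff₀ (hVmpos T) (hVmpos 0)] at hT
  have hG0 := hGpos 0
  have hVm0 := hVmpos 0
  have hVmT := hVmpos T
  nlinarith [mul_le_mul_of_nonneg_right hle (le_of_lt hVm0)]
end

section
/- Strict crossovers yield strictly positive crossover gain: for a time t, if there exist i ∈ S t and j ∉ S t with p (t+1) i > p (t+1) j (an individual asset from the bottom-ranked subset strictly overtakes one from the top-ranked subset), then C(t) > 0, and consequently log(V_s(t+1)/V_s(t)) − log(V_m(t+1)/V_m(t)) > log Θ_s(t+1) − log Θ_s(t). -/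
open Finset

lemma aux_sum_le_sum_of_card_eq {ι : Type*} [DecidableEq ι] (X Y : Finset ι) (f : ι → ℝ)
    (hcard : X.card = Y.card) (h : ∀ x ∈ X, ∀ y ∈ Y, f x ≤ f y) :
    ∑ x ∈ X, f x ≤ ∑ y ∈ Y, f y := by
  rcases Nat.eq_zero_or_pos X.card with h0 | hpos
  · have hX : X = ∅ := Finset.card_eq_zero.mp h0
    have hY : Y = ∅ := Finset.card_eq_zero.mp (hcard ▸ h0)
    simp [hX, hY]
  · have key : ∑ x ∈ X, ∑ _y ∈ Y, f x ≤ ∑ _x ∈ X, ∑ y ∈ Y, f y :=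
      Finset.sum_le_sum fun x hx => Finset.sum_le_sum fun y hy => h x hx y hy
    simp only [Finset.sum_const, nsmul_eq_mul] at key
    rw [← Finset.mul_sum] at key
    rw [hcard] at key hpos
    have : (0 : ℝ) < (Y.card : ℝ) := by exact_mod_cast hpos
    nlinarith [key]

lemma aux_sum_lt_sum_of_card_eq {ι : Type*} [DecidableEq ι] (X Y : Finset ι) (f : ι → ℝ)
    (hcard : X.card = Y.card) (h : ∀ x ∈ X, ∀ y ∈ Y, f x ≤ f y)
    (x₀ : ι) (hx₀ : x₀ ∈ X) (y₀ : ι) (hy₀ : y₀ ∈ Y) (hlt : f x₀ < f y₀) :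
    ∑ x ∈ X, f x < ∑ y ∈ Y, f y := by
  rw [← Finset.add_sum_erase X f hx₀, ← Finset.add_sum_erase Y f hy₀]
  have hle : ∑ x ∈ X.erase x₀, f x ≤ ∑ y ∈ Y.erase y₀, f y := by
    apply aux_sum_le_sum_of_card_eq
    · rw [Finset.card_erase_of_mem hx₀, Finset.card_erase_of_mem hy₀, hcard]
    · intro x hx y hy
      exact h x (Finset.mem_of_mem_erase hx) y (Finset.mem_of_mem_erase hy)
  linarith

/-- a strict rank crossover yields strictly positive crossover gain and a strictly higher one-period relative return for the small portfolio than the relative price change. -/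
theorem strict_crossover_positive_gain
    (N c : ℕ) (hc : 1 ≤ c) (hcN : c < N)
    (p : ℕ → Fin N → ℝ) (hp : ∀ t i, 0 < p t i)
    (S : ℕ → Finset (Fin N)) (hScard : ∀ t, (S t).card = N - c)
    (hbot : ∀ t, ∀ i ∈ S t, ∀ j ∉ S t, p t i ≤ p t j)
    (Vm B G Θs Θb Vs Vb C : ℕ → ℝ)
    (hVm : ∀ t, Vm t = ∑ i, p t i)
    (hB : ∀ t, B t = ∑ i ∈ S t, p t i)
    (hG : ∀ t, G t = ∑ i ∈ (S t)ᶜ, p t i)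
    (hΘs : ∀ t, Θs t = B t / Vm t)
    (hΘb : ∀ t, Θb t = G t / Vm t)
    (hVs0 : Vs 0 = Vm 0)
    (hVs : ∀ t, Vs (t + 1) = Vs t * (∑ i ∈ S t, p (t + 1) i) / B t)
    (hVb0 : Vb 0 = Vm 0)
    (hVb : ∀ t, Vb (t + 1) = Vb t * (∑ i ∈ (S t)ᶜ, p (t + 1) i) / G t)
    (hC : ∀ t, C t = (∑ i ∈ S t, p (t + 1) i) - B (t + 1)) :
    ∀ t, (∃ i ∈ S t, ∃ j ∉ S t, p (t + 1) i > p (t + 1) j) →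
      0 < C t ∧
        Real.log (Vs (t + 1) / Vs t) - Real.log (Vm (t + 1) / Vm t) >
          Real.log (Θs (t + 1)) - Real.log (Θs t) := by
  -- basic positivity facts
  have hNpos : 0 < N := lt_of_le_of_lt (Nat.zero_le c) hcN
  have hSne : ∀ t, (S t).Nonempty := by
    intro t
    rw [← Finset.card_pos, hScard t]
    omega
  have hBpos : ∀ t, 0 < B t := by
    intro t
    rw [hB t]
    exact Finset.sum_pos (fun i _ => hp t i) (hSne t)
  have hVmpos : ∀ t, 0 < Vm t := by
    intro t
    rw [hVm t]
    exact Finset.sum_pos (fun i _ => hp t i) ⟨⟨0, hNpos⟩, Finset.mem_univ _⟩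
  have hSumpos : ∀ t, 0 < ∑ i ∈ S t, p (t + 1) i := fun t =>
    Finset.sum_pos (fun i _ => hp (t + 1) i) (hSne t)
  have hVspos : ∀ t, 0 < Vs t := by
    intro t
    induction t with
    | zero => rw [hVs0]; exact hVmpos 0
    | succ n ih =>
      rw [hVs n]
      have := hBpos n
      have := hSumpos n
      positivity
  intro t ⟨i, hiA, j, hjA, hij⟩
  set q := p (t + 1) with hq
  set A := S t with hA
  set Bs := S (t + 1) with hBs
  -- cards of the symmetric difference parts agree
  have hcards : (Bs \ A).card = (A \ Bs).card := by
    have h1 := Finset.card_sdiff_add_card_inter A Bs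
    have h2 := Finset.card_sdiff_add_card_inter Bs A
    rw [Finset.inter_comm] at h2
    have : A.card = Bs.card := by rw [hScard t, hScard (t + 1)]
    omega
  have hcross : ∀ b ∈ Bs, ∀ a ∉ Bs, q b ≤ q a := hbot (t + 1)
  -- find a strict pair b* ∈ Bs \ A, a* ∈ A \ Bs with q b* < q a*
  have hpair : ∃ b ∈ Bs \ A, ∃ a ∈ A \ Bs, q b < q a := by
    by_cases hiB : i ∈ Bs
    · have hjB : j ∈ Bs := by
        by_contra hjB
        exact absurd (hcross i hiB j hjB) (not_le.mpr hij)
      have hjBA : j ∈ Bs \ A := Finset.mem_sdiff.mpr ⟨hjB, hjA⟩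
      have hABne : (A \ Bs).Nonempty := by
        rw [← Finset.card_pos, ← hcards, Finset.card_pos]
        exact ⟨j, hjBA⟩
      obtain ⟨a, haAB⟩ := hABne
      have haB : a ∉ Bs := (Finset.mem_sdiff.mp haAB).2
      exact ⟨j, hjBA, a, haAB, lt_of_lt_of_le hij (hcross i hiB a haB)⟩
    · have hiAB : i ∈ A \ Bs := Finset.mem_sdiff.mpr ⟨hiA, hiB⟩
      by_cases hjB : j ∈ Bs
      · exact ⟨j, Finset.mem_sdiff.mpr ⟨hjB, hjA⟩, i, hiAB, hij⟩
      · have hBAne : (Bs \ A).Nonempty := by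
          rw [← Finset.card_pos, hcards, Finset.card_pos]
          exact ⟨i, hiAB⟩
        obtain ⟨b, hbBA⟩ := hBAne
        have hbB : b ∈ Bs := (Finset.mem_sdiff.mp hbBA).1
        exact ⟨b, hbBA, i, hiAB, lt_of_le_of_lt (hcross b hbB j hjB) hij⟩
  obtain ⟨b, hbBA, a, haAB, hba⟩ := hpair
  -- strict inequality between sums over the symmetric difference parts
  have hsdiff : ∑ x ∈ Bs \ A, q x < ∑ y ∈ A \ Bs, q y := by
    apply aux_sum_lt_sum_of_card_eq _ _ _ hcards _ b hbBA a haAB hba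
    intro x hx y hy
    exact hcross x (Finset.mem_sdiff.mp hx).1 y (Finset.mem_sdiff.mp hy).2
  -- hence the key strict inequality on whole sums
  have hkey : ∑ x ∈ Bs, q x < ∑ y ∈ A, q y := by
    have h1 : ∑ x ∈ Bs ∩ A, q x + ∑ x ∈ Bs \ A, q x = ∑ x ∈ Bs, q x :=
      Finset.sum_inter_add_sum_sdiff Bs A q
    have h2 : ∑ y ∈ A ∩ Bs, q y + ∑ y ∈ A \ Bs, q y = ∑ y ∈ A, q y :=
      Finset.sum_inter_add_sum_sdiff A Bs q
    rw [Finset.inter_comm] at h1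
    linarith
  have hCpos : 0 < C t := by
    rw [hC t, hB (t + 1)]
    exact sub_pos.mpr hkey
  refine ⟨hCpos, ?_⟩
  -- the log inequality
  have hBt1lt : B (t + 1) < ∑ x ∈ A, q x := by rw [hB (t + 1)]; exact hkey
  have hVst := hVspos t
  have hBt := hBpos t
  have hBt1 := hBpos (t + 1)
  have hVmt := hVmpos t
  have hVmt1 := hVmpos (t + 1)
  have hSA := hSumpos t
  have hratio : Vs (t + 1) / Vs t = (∑ x ∈ A, q x) / B t := by
    rw [hVs t]
    field_simp
    ring
  rw [hratio, hΘs (t + 1), hΘs t,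
    Real.log_div (ne_of_gt hSA) (ne_of_gt hBt),
    Real.log_div (ne_of_gt hVmt1) (ne_of_gt hVmt),
    Real.log_div (ne_of_gt hBt1) (ne_of_gt hVmt1),
    Real.log_div (ne_of_gt hBt) (ne_of_gt hVmt)]
  have := Real.log_lt_log hBt1 hBt1lt
  linarith
end

section
/- Strict rank effect: for any time T, if Θ_s(T) ≥ Θ_s(0) and there exists a time t < T at which a strict crossover occurs (i.e. there exist i ∈ S t and j ∉ S t with p (t+1) i > p (t+1) j), then the small portfolio strictly outperforms the market: V_s(T) > V_m(T). -/
lemma aux_sum_le {α : Type*} [DecidableEq α] {s t : Finset α}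
    (h : s.card = t.card) (f : α → ℝ)
    (hle : ∀ i ∈ s, ∀ j ∈ t, f i ≤ f j) :
    ∑ i ∈ s, f i ≤ ∑ j ∈ t, f j := by
  classical
  let e := Finset.equivOfCardEq h
  calc ∑ i ∈ s, f i = ∑ i : s, f i := (Finset.sum_coe_sort s f).symm
    _ ≤ ∑ i : s, f (e i) := by
        apply Finset.sum_le_sum
        intro i _
        exact hle i i.2 (e i) (e i).2
    _ = ∑ j : t, f j := e.sum_comp (fun j : t => f (j : α))
    _ = ∑ j ∈ t, f j := Finset.sum_coe_sort t f

lemma aux_sum_lt {α : Type*} [DecidableEq α] {s t : Finset α}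
    (h : s.card = t.card) (f : α → ℝ)
    (hle : ∀ i ∈ s, ∀ j ∈ t, f i ≤ f j)
    {a b : α} (ha : a ∈ s) (hb : b ∈ t) (hab : f a < f b) :
    ∑ i ∈ s, f i < ∑ j ∈ t, f j := by
  rw [← Finset.add_sum_erase s f ha, ← Finset.add_sum_erase t f hb]
  have hcard : (s.erase a).card = (t.erase b).card := by
    rw [Finset.card_erase_of_mem ha, Finset.card_erase_of_mem hb, h]
  exact add_lt_add_of_lt_of_le hab
    (aux_sum_le hcard f (fun i hi j hj =>
      hle i (Finset.mem_of_mem_erase hi) j (Finset.mem_of_mem_erase hj)))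

lemma aux_diff_le {α : Type*} [DecidableEq α] {s t : Finset α}
    (h : s.card = t.card) (f : α → ℝ)
    (hle : ∀ i ∈ s, ∀ j ∉ s, f i ≤ f j) :
    ∑ i ∈ s, f i ≤ ∑ j ∈ t, f j := by
  have h1 : (s \ t).card = (t \ s).card := Finset.card_sdiff_comm h
  have h2 : ∑ i ∈ s \ t, f i ≤ ∑ j ∈ t \ s, f j :=
    aux_sum_le h1 f (fun i hi j hj =>
      hle i (Finset.mem_sdiff.mp hi).1 j (Finset.mem_sdiff.mp hj).2)
  have e1 := Finset.sum_inter_add_sum_sdiff s t f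
  have e2 := Finset.sum_inter_add_sum_sdiff t s f
  rw [Finset.inter_comm] at e2
  linarith

lemma aux_diff_lt {α : Type*} [DecidableEq α] {s t : Finset α}
    (h : s.card = t.card) (f : α → ℝ)
    (hle : ∀ i ∈ s, ∀ j ∉ s, f i ≤ f j)
    {a b : α} (ha : a ∈ s \ t) (hb : b ∈ t \ s) (hab : f a < f b) :
    ∑ i ∈ s, f i < ∑ j ∈ t, f j := by
  have h1 : (s \ t).card = (t \ s).card := Finset.card_sdiff_comm h
  have h2 : ∑ i ∈ s \ t, f i < ∑ j ∈ t \ s, f j :=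
    aux_sum_lt h1 f (fun i hi j hj =>
      hle i (Finset.mem_sdiff.mp hi).1 j (Finset.mem_sdiff.mp hj).2) ha hb hab
  have e1 := Finset.sum_inter_add_sum_sdiff s t f
  have e2 := Finset.sum_inter_add_sum_sdiff t s f
  rw [Finset.inter_comm] at e2
  linarith

/-- strict rank effect: if the bottom-ranked relative price has not fallen and a strict crossover occurs before time T, the small portfolio strictly outperforms the market. -/
theorem strict_rank_effect
    (N c : ℕ) (hc : 1 ≤ c) (hcN : c < N)
    (p : ℕ → Fin N → ℝ) (hp : ∀ t i, 0 < p t i)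
    (S : ℕ → Finset (Fin N)) (hScard : ∀ t, (S t).card = N - c)
    (hbot : ∀ t, ∀ i ∈ S t, ∀ j ∉ S t, p t i ≤ p t j)
    (Vm B G Θs Θb Vs Vb C : ℕ → ℝ)
    (hVm : ∀ t, Vm t = ∑ i, p t i)
    (hB : ∀ t, B t = ∑ i ∈ S t, p t i)
    (hG : ∀ t, G t = ∑ i ∈ (S t)ᶜ, p t i)
    (hΘs : ∀ t, Θs t = B t / Vm t)
    (hΘb : ∀ t, Θb t = G t / Vm t)
    (hVs0 : Vs 0 = Vm 0)
    (hVs : ∀ t, Vs (t + 1) = Vs t * (∑ i ∈ S t, p (t + 1) i) / B t)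
    (hVb0 : Vb 0 = Vm 0)
    (hVb : ∀ t, Vb (t + 1) = Vb t * (∑ i ∈ (S t)ᶜ, p (t + 1) i) / G t)
    (hC : ∀ t, C t = (∑ i ∈ S t, p (t + 1) i) - B (t + 1)) :
    ∀ T, Θs T ≥ Θs 0 →
      (∃ t < T, ∃ i ∈ S t, ∃ j ∉ S t, p (t + 1) i > p (t + 1) j) →
      Vs T > Vm T := by
  classical
  -- basic positivity
  have hSne : ∀ t, (S t).Nonempty := by
    intro t
    rw [← Finset.card_pos, hScard t]
    omega
  have hBpos : ∀ t, 0 < B t := by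
    intro t
    rw [hB t]
    exact Finset.sum_pos (fun i _ => hp t i) (hSne t)
  have hSumpos : ∀ t, 0 < ∑ i ∈ S t, p (t + 1) i :=
    fun t => Finset.sum_pos (fun i _ => hp (t + 1) i) (hSne t)
  have hVmpos : ∀ t, 0 < Vm t := by
    intro t
    rw [hVm t]
    exact Finset.sum_pos (fun i _ => hp t i)
      (Finset.univ_nonempty_iff.mpr ⟨⟨0, by omega⟩⟩)
  have hcardeq : ∀ t, (S (t + 1)).card = (S t).card := by
    intro t; rw [hScard, hScard]
  -- step inequality: B (t+1) ≤ ∑_{i ∈ S t} p (t+1) i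
  have hstep : ∀ t, B (t + 1) ≤ ∑ i ∈ S t, p (t + 1) i := by
    intro t
    rw [hB (t + 1)]
    exact aux_diff_le (hcardeq t) (p (t + 1)) (hbot (t + 1))
  -- strict step at a crossover time
  have hstepstrict : ∀ t, (∃ i ∈ S t, ∃ j ∉ S t, p (t + 1) i > p (t + 1) j) →
      B (t + 1) < ∑ i ∈ S t, p (t + 1) i := by
    rintro t ⟨i, hi, j, hj, hij⟩
    rw [hB (t + 1)]
    set S₀ := S t
    set S₁ := S (t + 1)
    have hb1 := hbot (t + 1)
    -- find a ∈ S₁ \ S₀, b ∈ S₀ \ S₁ with p (t+1) a < p (t+1) b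
    have key : ∃ a ∈ S₁ \ S₀, ∃ b ∈ S₀ \ S₁, p (t + 1) a < p (t + 1) b := by
      by_cases hiS : i ∈ S₁
      · have hjS : j ∈ S₁ := by
          by_contra hjn
          exact absurd (hb1 i hiS j hjn) (not_le.mpr hij)
        have haS : j ∈ S₁ \ S₀ := Finset.mem_sdiff.mpr ⟨hjS, hj⟩
        have hne : (S₀ \ S₁).Nonempty := by
          rw [← Finset.card_pos, ← Finset.card_sdiff_comm (hcardeq t), Finset.card_pos]
          exact ⟨j, haS⟩
        obtain ⟨b, hbS⟩ := hne
        refine ⟨j, haS, b, hbS, lt_of_lt_of_le hij (hb1 i hiS b (Finset.mem_sdiff.mp hbS).2)⟩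
      · have hbS : i ∈ S₀ \ S₁ := Finset.mem_sdiff.mpr ⟨hi, hiS⟩
        have hne : (S₁ \ S₀).Nonempty := by
          rw [← Finset.card_pos, Finset.card_sdiff_comm (hcardeq t), Finset.card_pos]
          exact ⟨i, hbS⟩
        by_cases hjS : j ∈ S₁
        · exact ⟨j, Finset.mem_sdiff.mpr ⟨hjS, hj⟩, i, hbS, hij⟩
        · obtain ⟨a, haS⟩ := hne
          exact ⟨a, haS, i, hbS,
            lt_of_le_of_lt (hb1 a (Finset.mem_sdiff.mp haS).1 j hjS) hij⟩
    obtain ⟨a, ha, b, hb, hab⟩ := key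
    exact aux_diff_lt (hcardeq t) (p (t + 1)) hb1 ha hb hab
  -- main induction: Vs positivity and Vm 0 * B T ≤ Vs T * B 0 (strict after crossover)
  have main : ∀ T, 0 < Vs T ∧ Vm 0 * B T ≤ Vs T * B 0 ∧
      ((∃ t < T, ∃ i ∈ S t, ∃ j ∉ S t, p (t + 1) i > p (t + 1) j) →
        Vm 0 * B T < Vs T * B 0) := by
    intro T
    induction T with
    | zero =>
      refine ⟨by rw [hVs0]; exact hVmpos 0, le_of_eq (by rw [hVs0]), ?_⟩
      rintro ⟨t, ht, _⟩; omega
    | succ T ih =>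
      obtain ⟨hVspos, hle, hlt⟩ := ih
      have hBT := hBpos T
      have hBT1 := hBpos (T + 1)
      have hSm := hSumpos T
      have hVm0 := hVmpos 0
      have hstepT := hstep T
      have hVsT1 : Vs (T + 1) * B T = Vs T * (∑ i ∈ S T, p (T + 1) i) := by
        rw [hVs T, div_mul_cancel₀ _ (hBpos T).ne']
      have hVspos1 : 0 < Vs (T + 1) := by
        rw [hVs T]
        positivity
      refine ⟨hVspos1, ?_, ?_⟩
      · have : Vm 0 * B (T + 1) * B T ≤ Vs (T + 1) * B 0 * B T := by
          rw [mul_right_comm (Vs (T+1)), hVsT1]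
          nlinarith [mul_le_mul_of_nonneg_right hle (le_of_lt hSm),
            mul_le_mul_of_nonneg_right (mul_le_mul_of_nonneg_left hstepT (le_of_lt hVm0)) (le_of_lt hBT)]
        exact le_of_mul_le_mul_right this hBT
      · rintro ⟨t, ht, hcross⟩
        have : Vm 0 * B (T + 1) * B T < Vs (T + 1) * B 0 * B T := by
          rw [mul_right_comm (Vs (T+1)), hVsT1]
          rcases Nat.lt_succ_iff_lt_or_eq.mp ht with ht' | rfl
          · have h1 := hlt ⟨t, ht', hcross⟩
            nlinarith [mul_le_mul_of_nonneg_right (mul_le_mul_of_nonneg_left hstepT (le_of_lt hVm0)) (le_of_lt hBT),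
              mul_lt_mul_of_pos_right h1 hSm]
          · have h1 := hstepstrict t hcross
            nlinarith [mul_le_mul_of_nonneg_right hle (le_of_lt hSm),
              mul_lt_mul_of_pos_right (mul_lt_mul_of_pos_left h1 hVm0) hBT]
        exact lt_of_mul_lt_mul_right this (le_of_lt hBT)
  intro T hΘ hcross
  obtain ⟨hVspos, _, hlt⟩ := main T
  have h1 := hlt hcross
  have hΘ' : B T * Vm 0 ≥ B 0 * Vm T := by
    rw [hΘs T, hΘs 0, ge_iff_le, div_le_div_iff₀ (hVmpos 0) (hVmpos T)] at hΘ
    linarith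
  have hB0 := hBpos 0
  have hVm0 := hVmpos 0
  nlinarith [mul_pos hB0 hVm0]
end

section
/- No rank effect requires falling bottom-ranked relative prices: for any time T, if the small portfolio does not outperform the market, i.e. V_s(T) ≤ V_m(T), then the relative price of the bottom-ranked subset must have declined by at least the accumulated crossovers: log Θ_s(0) − log Θ_s(T) ≥ Σ_{t=0}^{T−1} log(1 + C(t)/B(t+1)) ≥ 0; in particular Θ_s(T) ≤ Θ_s(0). -/
/-- Among subsets of a given cardinality, a bottom-ranked subset has minimal sum. -/
lemma bot_sum_min {N : ℕ} (f : Fin N → ℝ) (A B : Finset (Fin N))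
    (hcard : A.card = B.card)
    (hbot : ∀ i ∈ B, ∀ j ∉ B, f i ≤ f j) :
    ∑ i ∈ B, f i ≤ ∑ i ∈ A, f i := by
  have hA : ∑ i ∈ A, f i = ∑ i ∈ A ∩ B, f i + ∑ i ∈ A \ B, f i :=
    (Finset.sum_inter_add_sum_sdiff A B f).symm
  have hBs : ∑ i ∈ B, f i = ∑ i ∈ B ∩ A, f i + ∑ i ∈ B \ A, f i :=
    (Finset.sum_inter_add_sum_sdiff B A f).symm
  rw [hA, hBs, Finset.inter_comm B A]
  have hkey : ∑ i ∈ B \ A, f i ≤ ∑ i ∈ A \ B, f i := by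
    have hc : (B \ A).card = (A \ B).card := by
      have h1 := Finset.card_sdiff_add_card_inter B A
      have h2 := Finset.card_sdiff_add_card_inter A B
      have h3 : (B ∩ A).card = (A ∩ B).card := by rw [Finset.inter_comm]
      omega
    rcases Nat.eq_zero_or_pos (A \ B).card with h0 | hpos
    · have hB0 : (B \ A).card = 0 := by omega
      rw [Finset.card_eq_zero] at h0 hB0
      simp [h0, hB0]
    · have hmul : ((A \ B).card : ℝ) * ∑ i ∈ B \ A, f i ≤
          ((B \ A).card : ℝ) * ∑ j ∈ A \ B, f j := by
        have step : ∑ j ∈ A \ B, ∑ i ∈ B \ A, f i ≤ ∑ j ∈ A \ B, ∑ i ∈ B \ A, f j := by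
          apply Finset.sum_le_sum
          intro j hj
          apply Finset.sum_le_sum
          intro i hi
          exact hbot i (Finset.mem_sdiff.mp hi).1 j (Finset.mem_sdiff.mp hj).2
        have lhs : ∑ j ∈ A \ B, ∑ i ∈ B \ A, f i =
            ((A \ B).card : ℝ) * ∑ i ∈ B \ A, f i := by
          rw [Finset.sum_const, nsmul_eq_mul]
        have rhs : ∑ j ∈ A \ B, ∑ i ∈ B \ A, f j =
            ((B \ A).card : ℝ) * ∑ j ∈ A \ B, f j := by
          rw [Finset.sum_comm, Finset.sum_const, nsmul_eq_mul]
        rw [lhs, rhs] at step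
        exact step
      rw [hc] at hmul
      have hpos' : (0 : ℝ) < ((A \ B).card : ℝ) := by exact_mod_cast hpos
      exact le_of_mul_le_mul_left hmul hpos'
  linarith

/-- no rank effect requires falling bottom-ranked relative prices: if the small portfolio does not outperform the market, the bottom-ranked relative price must have declined by at least the accumulated crossovers. -/
theorem no_rank_effect_requires_falling_prices
    (N c : ℕ) (hc : 1 ≤ c) (hcN : c < N)
    (p : ℕ → Fin N → ℝ) (hp : ∀ t i, 0 < p t i)
    (S : ℕ → Finset (Fin N)) (hScard : ∀ t, (S t).card = N - c)
    (hbot : ∀ t, ∀ i ∈ S t, ∀ j ∉ S t, p t i ≤ p t j)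
    (Vm B G Θs Θb Vs Vb C : ℕ → ℝ)
    (hVm : ∀ t, Vm t = ∑ i, p t i)
    (hB : ∀ t, B t = ∑ i ∈ S t, p t i)
    (hG : ∀ t, G t = ∑ i ∈ (S t)ᶜ, p t i)
    (hΘs : ∀ t, Θs t = B t / Vm t)
    (hΘb : ∀ t, Θb t = G t / Vm t)
    (hVs0 : Vs 0 = Vm 0)
    (hVs : ∀ t, Vs (t + 1) = Vs t * (∑ i ∈ S t, p (t + 1) i) / B t)
    (hVb0 : Vb 0 = Vm 0)
    (hVb : ∀ t, Vb (t + 1) = Vb t * (∑ i ∈ (S t)ᶜ, p (t + 1) i) / G t)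
    (hC : ∀ t, C t = (∑ i ∈ S t, p (t + 1) i) - B (t + 1)) :
    ∀ T, Vs T ≤ Vm T →
      (0 ≤ ∑ t ∈ Finset.range T, Real.log (1 + C t / B (t + 1)) ∧
        (∑ t ∈ Finset.range T, Real.log (1 + C t / B (t + 1))) ≤
          Real.log (Θs 0) - Real.log (Θs T) ∧
        Θs T ≤ Θs 0) := by
  -- basic positivity
  have hSne : ∀ t, (S t).Nonempty := by
    intro t
    rw [← Finset.card_pos, hScard]
    omega
  have hBpos : ∀ t, 0 < B t := by
    intro t
    rw [hB]
    exact Finset.sum_pos (fun i _ => hp t i) (hSne t)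
  have hVmpos : ∀ t, 0 < Vm t := by
    intro t
    rw [hVm]
    exact Finset.sum_pos (fun i _ => hp t i)
      (Finset.univ_nonempty_iff.mpr ⟨⟨0, by omega⟩⟩)
  have hsumpos : ∀ t, 0 < ∑ i ∈ S t, p (t + 1) i := by
    intro t
    exact Finset.sum_pos (fun i _ => hp (t + 1) i) (hSne t)
  have hVspos : ∀ t, 0 < Vs t := by
    intro t
    induction t with
    | zero => rw [hVs0]; exact hVmpos 0
    | succ n ih =>
        rw [hVs n]
        exact div_pos (mul_pos ih (hsumpos n)) (hBpos n)
  have hΘpos : ∀ t, 0 < Θs t := fun t => by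
    rw [hΘs]; exact div_pos (hBpos t) (hVmpos t)
  -- crossover nonneg
  have hCnn : ∀ t, 0 ≤ C t := by
    intro t
    rw [hC, hB, sub_nonneg]
    exact bot_sum_min (p (t + 1)) (S t) (S (t + 1))
      (by rw [hScard, hScard]) (hbot (t + 1))
  have hBle : ∀ t, B (t + 1) ≤ ∑ i ∈ S t, p (t + 1) i := by
    intro t
    have := hCnn t
    rw [hC] at this
    linarith
  have hlogterm : ∀ t, 0 ≤ Real.log (1 + C t / B (t + 1)) := by
    intro t
    apply Real.log_nonneg
    have : 0 ≤ C t / B (t + 1) := div_nonneg (hCnn t) (hBpos (t + 1)).le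
    linarith
  -- main identity
  have hmain : ∀ T, Real.log (Vs T) =
      Real.log (Vm 0) - Real.log (B 0) + Real.log (B T) +
        ∑ t ∈ Finset.range T, Real.log (1 + C t / B (t + 1)) := by
    intro T
    induction T with
    | zero => simp [hVs0]
    | succ n ih =>
        have hsum_eq : (∑ i ∈ S n, p (n + 1) i) =
            B (n + 1) * (1 + C n / B (n + 1)) := by
          rw [mul_add, mul_one, mul_div_cancel₀ _ (hBpos (n + 1)).ne', hC n]
          ring
        rw [hVs n, Real.log_div (mul_pos (hVspos n) (hsumpos n)).ne' (hBpos n).ne',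
          Real.log_mul (hVspos n).ne' (hsumpos n).ne', hsum_eq,
          Real.log_mul (hBpos (n + 1)).ne' (ne_of_gt (by
            have : 0 ≤ C n / B (n + 1) := div_nonneg (hCnn n) (hBpos (n + 1)).le
            linarith)), ih, Finset.sum_range_succ]
        ring
  intro T hle
  have hS0 : 0 ≤ ∑ t ∈ Finset.range T, Real.log (1 + C t / B (t + 1)) :=
    Finset.sum_nonneg fun t _ => hlogterm t
  have hloglog : Real.log (Vs T) ≤ Real.log (Vm T) :=
    Real.log_le_log (hVspos T) hle
  have hΘlog : ∀ t, Real.log (Θs t) = Real.log (B t) - Real.log (Vm t) := by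
    intro t
    rw [hΘs, Real.log_div (hBpos t).ne' (hVmpos t).ne']
  have h2 : (∑ t ∈ Finset.range T, Real.log (1 + C t / B (t + 1))) ≤
      Real.log (Θs 0) - Real.log (Θs T) := by
    rw [hΘlog, hΘlog]
    have := hmain T
    linarith
  refine ⟨hS0, h2, ?_⟩
  have : Real.log (Θs T) ≤ Real.log (Θs 0) := by linarith
  exact (Real.log_le_log_iff (hΘpos T) (hΘpos 0)).mp this
end

section
/- Discrete-time analogue of the entry/exit decomposition (Theorem B.1, equation (35)): for every time T, log V_{b,c}(T) − log V_{b,n}(T) = Σ_{t=0}^{T−1} [log(1 − C_c(t)/G_c(t+1)) − log(1 − C_n(t)/G_n(t+1))] + log Θ'(T) − log Θ'(0), where Θ'(t) := G_c(t)/G_n(t) is the price of the top-c assets relative to the top-n (tradable) assets; i.e., the return of the big portfolio relative to the modified (top-n) market portfolio decomposes exactly into crossover terms at the two rank boundaries plus the change in the log relative price Θ'. -/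
/-- discrete-time analogue of the entry/exit decomposition (Theorem B.1,
eq. (35)): the cumulative return of the big (top-`c`) portfolio relative to the modified
(top-`n`) market portfolio decomposes exactly into crossover terms at the two rank
boundaries plus the change in the log relative price `Θ' = G_c / G_n`. -/
theorem entry_exit_decomposition
    (N c n : ℕ) (hc : 1 ≤ c) (hcn : c < n) (hnN : n ≤ N)
    (p : ℕ → Fin N → ℝ) (hp : ∀ t i, 0 < p t i)
    (U W : ℕ → Finset (Fin N))
    (hUW : ∀ t, U t ⊆ W t)
    (hUcard : ∀ t, (U t).card = c) (hWcard : ∀ t, (W t).card = n)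
    (hUtop : ∀ t, ∀ i ∈ U t, ∀ j ∉ U t, p t i ≥ p t j)
    (hWtop : ∀ t, ∀ i ∈ W t, ∀ j ∉ W t, p t i ≥ p t j)
    (Gc Gn Θ' Vbc Vbn Cc Cn : ℕ → ℝ)
    (hGc : ∀ t, Gc t = ∑ i ∈ U t, p t i)
    (hGn : ∀ t, Gn t = ∑ i ∈ W t, p t i)
    (hΘ' : ∀ t, Θ' t = Gc t / Gn t)
    (hVbc0 : Vbc 0 = Gn 0)
    (hVbc : ∀ t, Vbc (t + 1) = Vbc t * (∑ i ∈ U t, p (t + 1) i) / Gc t)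
    (hVbn0 : Vbn 0 = Gn 0)
    (hVbn : ∀ t, Vbn (t + 1) = Vbn t * (∑ i ∈ W t, p (t + 1) i) / Gn t)
    (hCc : ∀ t, Cc t = Gc (t + 1) - ∑ i ∈ U t, p (t + 1) i)
    (hCn : ∀ t, Cn t = Gn (t + 1) - ∑ i ∈ W t, p (t + 1) i) :
    ∀ T, Real.log (Vbc T) - Real.log (Vbn T) =
      (∑ t ∈ Finset.range T,
          (Real.log (1 - Cc t / Gc (t + 1)) - Real.log (1 - Cn t / Gn (t + 1)))) +
        Real.log (Θ' T) - Real.log (Θ' 0) := by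
  have hUne : ∀ t, (U t).Nonempty := fun t => by
    rw [← Finset.card_pos, hUcard]; omega
  have hWne : ∀ t, (W t).Nonempty := fun t => by
    rw [← Finset.card_pos, hWcard]; omega
  have hSc : ∀ s t, 0 < ∑ i ∈ U t, p s i := fun s t =>
    Finset.sum_pos (fun i _ => hp s i) (hUne t)
  have hSn : ∀ s t, 0 < ∑ i ∈ W t, p s i := fun s t =>
    Finset.sum_pos (fun i _ => hp s i) (hWne t)
  have hGcpos : ∀ t, 0 < Gc t := fun t => (hGc t) ▸ hSc t t
  have hGnpos : ∀ t, 0 < Gn t := fun t => (hGn t) ▸ hSn t t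
  have hVbcpos : ∀ t, 0 < Vbc t := by
    intro t; induction t with
    | zero => rw [hVbc0]; exact hGnpos 0
    | succ t ih => rw [hVbc t]; exact div_pos (mul_pos ih (hSc (t+1) t)) (hGcpos t)
  have hVbnpos : ∀ t, 0 < Vbn t := by
    intro t; induction t with
    | zero => rw [hVbn0]; exact hGnpos 0
    | succ t ih => rw [hVbn t]; exact div_pos (mul_pos ih (hSn (t+1) t)) (hGnpos t)
  have hΘlog : ∀ t, Real.log (Θ' t) = Real.log (Gc t) - Real.log (Gn t) := fun t => by
    rw [hΘ' t, Real.log_div (hGcpos t).ne' (hGnpos t).ne']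
  have hCclog : ∀ t, Real.log (1 - Cc t / Gc (t + 1)) =
      Real.log (∑ i ∈ U t, p (t + 1) i) - Real.log (Gc (t + 1)) := fun t => by
    have h1 : (1 : ℝ) - Cc t / Gc (t + 1) = (∑ i ∈ U t, p (t + 1) i) / Gc (t + 1) := by
      rw [hCc t, sub_div, div_self (hGcpos (t+1)).ne']; ring
    rw [h1, Real.log_div (hSc (t+1) t).ne' (hGcpos (t+1)).ne']
  have hCnlog : ∀ t, Real.log (1 - Cn t / Gn (t + 1)) =
      Real.log (∑ i ∈ W t, p (t + 1) i) - Real.log (Gn (t + 1)) := fun t => by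
    have h1 : (1 : ℝ) - Cn t / Gn (t + 1) = (∑ i ∈ W t, p (t + 1) i) / Gn (t + 1) := by
      rw [hCn t, sub_div, div_self (hGnpos (t+1)).ne']; ring
    rw [h1, Real.log_div (hSn (t+1) t).ne' (hGnpos (t+1)).ne']
  intro T
  induction T with
  | zero => simp [hVbc0, hVbn0]
  | succ T ih =>
    rw [Finset.sum_range_succ, hVbc T, hVbn T,
      Real.log_div (mul_pos (hVbcpos T) (hSc (T+1) T)).ne' (hGcpos T).ne',
      Real.log_div (mul_pos (hVbnpos T) (hSn (T+1) T)).ne' (hGnpos T).ne',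
      Real.log_mul (hVbcpos T).ne' (hSc (T+1) T).ne',
      Real.log_mul (hVbnpos T).ne' (hSn (T+1) T).ne',
      hCclog T, hCnlog T, hΘlog (T+1)]
    rw [hΘlog T] at ih
    linarith
end
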